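/- arXiv:1706.04247 — 13 statements merged into one kernel-verified Lean document; each statement's English description precedes it below -/
import Mathlib

section
/- Let G be a GFP sequence. Then for every integer k ≥ 1, d² divides G(2k) − g^{k−1}·(k·d·G(1) + g·G(0)), and for every integer k ≥ 0, d² divides G(2k+1) − g^{k}·(k·d·G(0) + G(1)), where the integer k is regarded as a constant polynomial in ℤ[x]. -/
open Polynomial

theorem GFP_mod_d_sq (d g : Polynomial ℤ) (hd : d ≠ 0) (hg : g ≠ 0)
    (G : ℕ → Polynomial ℤ) (p₀ : ℤ) (h0 : G 0 = C p₀) (h1 : G 1 ≠ 0)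
    (hrec : ∀ n : ℕ, 2 ≤ n → G n = d * G (n - 1) + g * G (n - 2)) :
    (∀ k : ℕ, 1 ≤ k →
      d ^ 2 ∣ G (2 * k) - g ^ (k - 1) * ((k : Polynomial ℤ) * d * G 1 + g * G 0)) ∧
    (∀ k : ℕ,
      d ^ 2 ∣ G (2 * k + 1) - g ^ k * ((k : Polynomial ℤ) * d * G 0 + G 1)) := by
  have key : ∀ k : ℕ,
      (d ^ 2 ∣ G (2 * k + 1) - g ^ k * ((k : Polynomial ℤ) * d * G 0 + G 1)) ∧
      (d ^ 2 ∣ G (2 * k + 2) - g ^ k * (((k : Polynomial ℤ) + 1) * d * G 1 + g * G 0)) := by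
    intro k
    induction k with
    | zero =>
      constructor
      · exact ⟨0, by push_cast; ring⟩
      · have h2 : G 2 = d * G 1 + g * G 0 := by
          have := hrec 2 (by norm_num)
          simpa using this
        exact ⟨0, by rw [h2]; push_cast; ring⟩
    | succ k ih =>
      obtain ⟨⟨a, ha⟩, ⟨b, hb⟩⟩ := ih
      have hG1 : G (2 * k + 1) = d ^ 2 * a + g ^ k * ((k : Polynomial ℤ) * d * G 0 + G 1) :=
        by linear_combination ha
      have hG2 : G (2 * k + 2) = d ^ 2 * b + g ^ k * (((k : Polynomial ℤ) + 1) * d * G 1 + g * G 0) :=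
        by linear_combination hb
      have e3 : G (2 * k + 3) = d * G (2 * k + 2) + g * G (2 * k + 1) := by
        have := hrec (2 * k + 3) (by omega)
        simpa [show 2 * k + 3 - 1 = 2 * k + 2 from by omega,
               show 2 * k + 3 - 2 = 2 * k + 1 from by omega] using this
      have e4 : G (2 * k + 4) = d * G (2 * k + 3) + g * G (2 * k + 2) := by
        have := hrec (2 * k + 4) (by omega)
        simpa [show 2 * k + 4 - 1 = 2 * k + 3 from by omega,
               show 2 * k + 4 - 2 = 2 * k + 2 from by omega] using this
      constructor
      · refine ⟨d * b + g * a + g ^ k * ((k : Polynomial ℤ) + 1) * G 1, ?_⟩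
        rw [show 2 * (k + 1) + 1 = 2 * k + 3 from by ring, e3, hG1, hG2]
        push_cast
        ring
      · refine ⟨d * (d * b + g * a + g ^ k * ((k : Polynomial ℤ) + 1) * G 1) + g * b
          + g ^ (k + 1) * ((k : Polynomial ℤ) + 1) * G 0, ?_⟩
        rw [show 2 * (k + 1) + 2 = 2 * k + 4 from by ring, e4, e3, hG1, hG2]
        push_cast
        ring
  constructor
  · intro k hk
    obtain ⟨m, rfl⟩ : ∃ m, k = m + 1 := ⟨k - 1, by omega⟩
    obtain ⟨c, hc⟩ := (key m).2
    refine ⟨c, ?_⟩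
    rw [show 2 * (m + 1) = 2 * m + 2 from by ring, Nat.add_sub_cancel]
    push_cast
    linear_combination hc
  · exact fun k => (key k).1
end

section
/- Let G be a GFP sequence with G(0) = p₀ and G(1) = p₁, and let H : ℕ × ℕ → ℤ[x] satisfy: H(0,0) = p₀², H(1,0) = p₀·p₁, H(1,1) = p₀·p₁, H(2,1) = p₁², H(r,k) = d·H(r−1,k) + g·H(r−2,k) whenever r ≥ 2 and 0 ≤ k ≤ r−2, and H(r,k) = d·H(r−1,k−1) + g·H(r−2,k−2) whenever r ≥ 2 and 2 ≤ k ≤ r. Then H(r,k) = G(k)·G(r−k) for all 0 ≤ k ≤ r. -/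
open Polynomial

theorem hosoya_entry_eq_prod (d g : Polynomial ℤ) (hd : d ≠ 0) (hg : g ≠ 0)
    (G : ℕ → Polynomial ℤ) (p₀ : ℤ) (h0 : G 0 = C p₀) (h1 : G 1 ≠ 0)
    (hrec : ∀ n : ℕ, 2 ≤ n → G n = d * G (n - 1) + g * G (n - 2))
    (H : ℕ → ℕ → Polynomial ℤ)
    (hH00 : H 0 0 = G 0 ^ 2) (hH10 : H 1 0 = G 0 * G 1) (hH11 : H 1 1 = G 0 * G 1)
    (hH21 : H 2 1 = G 1 ^ 2)
    (hHrec1 : ∀ r k : ℕ, 2 ≤ r → k ≤ r - 2 →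
      H r k = d * H (r - 1) k + g * H (r - 2) k)
    (hHrec2 : ∀ r k : ℕ, 2 ≤ r → 2 ≤ k → k ≤ r →
      H r k = d * H (r - 1) (k - 1) + g * H (r - 2) (k - 2)) :
    ∀ r k : ℕ, k ≤ r → H r k = G k * G (r - k) := by
  have hA : ∀ r : ℕ, H r 0 = G 0 * G r := by
    intro r
    induction r using Nat.strong_induction_on with
    | _ r ih =>
      match r with
      | 0 => simpa [sq] using hH00
      | 1 => simpa using hH10
      | (n+2) =>
        rw [hHrec1 (n+2) 0 (by omega) (by omega)]
        have e1 : n + 2 - 1 = n + 1 := by omega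
        have e2 : n + 2 - 2 = n := by omega
        rw [e1, e2, ih (n+1) (by omega), ih n (by omega),
          hrec (n+2) (by omega), e1, e2]
        ring
  have hB : ∀ r : ℕ, 1 ≤ r → H r 1 = G 1 * G (r - 1) := by
    intro r
    induction r using Nat.strong_induction_on with
    | _ r ih =>
      match r with
      | 0 => intro h; omega
      | 1 => intro _; simpa using hH11.trans (mul_comm _ _)
      | 2 => intro _; simpa [sq] using hH21
      | (n+3) =>
        intro _
        rw [hHrec1 (n+3) 1 (by omega) (by omega)]
        have e1 : n + 3 - 1 = n + 2 := by omega
        have e2 : n + 3 - 2 = n + 1 := by omega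
        rw [e1, e2, ih (n+2) (by omega) (by omega), ih (n+1) (by omega) (by omega),
          hrec (n+2) (by omega)]
        have e3 : n + 2 - 1 = n + 1 := by omega
        have e4 : n + 2 - 2 = n := by omega
        have e5 : n + 1 - 1 = n := by omega
        rw [e3, e4, e5]
        ring
  intro r k
  induction k using Nat.strong_induction_on generalizing r with
  | _ k ih =>
    match k with
    | 0 => intro _; simpa using hA r
    | 1 => intro hkr; exact hB r hkr
    | (m+2) =>
      intro hkr
      rw [hHrec2 r (m+2) (by omega) (by omega) hkr]
      have e1 : m + 2 - 1 = m + 1 := by omega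
      have e2 : m + 2 - 2 = m := by omega
      rw [e1, e2, ih (m+1) (by omega) (r-1) (by omega), ih m (by omega) (r-2) (by omega)]
      have e3 : r - 1 - (m+1) = r - (m+2) := by omega
      have e4 : r - 2 - m = r - (m+2) := by omega
      rw [e3, e4, hrec (m+2) (by omega), e1, e2]
      ring
end

section
/- Let G be a GFP sequence of Fibonacci type with gcd(d, g) a unit, and let n = 2k₁ and m = 2k₂ with k₁, k₂ ≥ 1. Then gcd(b₁, b₂, b₃) is associated to d · gcd(d, k₁, k₂) and gcd(a₁, a₂, a₃) is associated to d · gcd(d, k₁−1, k₂+1), where the integers k₁, k₂, k₁−1, k₂+1 are regarded as constant polynomials in ℤ[x]. In particular gcd(a₁, a₂, a₃) = β · gcd(b₁, b₂, b₃) with β = gcd(d, k₁−1, k₂+1)/gcd(d, k₁, k₂). -/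
/-!
Write `G (2 * k) = d * u k`, where `u (k + 1) = G (2 * k + 1) + g * u k`. Consecutive terms of `G`
are coprime, and modulo `d` one has `G (2 * k + 1) ≡ g ^ k` and `g * u k ≡ k * g ^ k`; since `d` and
`g` are coprime, `u k` and `u (k + 1)` are coprime, and a divisor `q` of `d` divides `u k` exactly
when it divides `k`. After the common factor `d` is pulled out of the products
`G (2 * x) * G (2 * z + 1)`, `G (2 * x + 2) * G (2 * z)` and `G (2 * x + 1) * G (2 * z + 2)`, a common
divisor of what is left is coprime to `u (x + 1) * u z`, hence divides `d`, and then it divides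
`u x` and `u (z + 1)`, that is, `x` and `z + 1`.
-/

structure IsFibonacciType {R : Type*} [Semiring R] (d g : R) (G : ℕ → R) : Prop where
  zero : G 0 = 0
  one : G 1 = 1
  add_two : ∀ n, G (n + 2) = d * G (n + 1) + g * G n

def evenCofactor {R : Type*} [Semiring R] (g : R) (G : ℕ → R) : ℕ → R
  | 0 => 0
  | k + 1 => G (2 * k + 1) + g * evenCofactor g G k

theorem associated_of_forall_dvd_iff {α : Type*} [MonoidWithZero α] [IsLeftCancelMulZero α]
    {a b : α} (h : ∀ q, q ∣ a ↔ q ∣ b) : Associated a b :=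
  associated_of_dvd_dvd ((h a).1 dvd_rfl) ((h b).2 dvd_rfl)

theorem associated_gcd_mul_mul {α : Type*} [CommMonoidWithZero α] [GCDMonoid α]
    {a b c d : α} (hbc : IsRelPrime b c) (had : IsRelPrime a d) :
    Associated (gcd (a * b) (c * d)) (gcd a c * gcd b d) := by
  refine associated_of_dvd_dvd ?_ (dvd_gcd (mul_dvd_mul (gcd_dvd_left _ _) (gcd_dvd_left _ _))
    (mul_dvd_mul (gcd_dvd_right _ _) (gcd_dvd_right _ _)))
  have hc : gcd (a * b) c ∣ gcd a c := dvd_gcd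
    ((hbc.symm.of_dvd_left (gcd_dvd_right _ _)).dvd_of_dvd_mul_right (gcd_dvd_left _ _))
    (gcd_dvd_right _ _)
  have hd : gcd (a * b) d ∣ gcd b d := dvd_gcd
    ((had.symm.of_dvd_left (gcd_dvd_right _ _)).dvd_of_dvd_mul_left (gcd_dvd_left _ _))
    (gcd_dvd_right _ _)
  exact (gcd_mul_dvd_mul_gcd _ _ _).trans (mul_dvd_mul hc hd)

namespace IsFibonacciType

variable {R : Type*} {d g : R} {G : ℕ → R}

section

variable [CommSemiring R]

theorem exists_eq_pow_add_mul (hG : IsFibonacciType d g G) (n : ℕ) :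
    ∃ t, G (n + 1) = d ^ n + g * t := by
  induction n with
  | zero => exact ⟨0, by simp [hG.one]⟩
  | succ n ih =>
    obtain ⟨t, ht⟩ := ih
    exact ⟨d * t + G n, by rw [hG.add_two, ht]; ring⟩

theorem exists_odd_eq_pow_add_mul (hG : IsFibonacciType d g G) (k : ℕ) :
    ∃ t, G (2 * k + 1) = g ^ k + d * t := by
  induction k with
  | zero => exact ⟨0, by simp [hG.one]⟩
  | succ k ih =>
    obtain ⟨t, ht⟩ := ih
    refine ⟨g * t + G (2 * k + 2), ?_⟩
    rw [show 2 * (k + 1) + 1 = 2 * k + 1 + 2 by ring, hG.add_two, ht]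
    ring

theorem even_eq_mul_evenCofactor (hG : IsFibonacciType d g G) (k : ℕ) :
    G (2 * k) = d * evenCofactor g G k := by
  induction k with
  | zero => simp [evenCofactor, hG.zero]
  | succ k ih =>
    rw [evenCofactor, show 2 * (k + 1) = 2 * k + 2 by ring, hG.add_two, ih]
    ring

theorem evenCofactor_dvd (hG : IsFibonacciType d g G) (k : ℕ) : evenCofactor g G k ∣ G (2 * k) :=
  ⟨d, by rw [hG.even_eq_mul_evenCofactor, mul_comm]⟩

theorem exists_mul_evenCofactor_eq (hG : IsFibonacciType d g G) (k : ℕ) :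
    ∃ s, g * evenCofactor g G k = k * g ^ k + d * s := by
  induction k with
  | zero => exact ⟨0, by simp [evenCofactor]⟩
  | succ k ih =>
    obtain ⟨s, hs⟩ := ih
    obtain ⟨t, ht⟩ := hG.exists_odd_eq_pow_add_mul k
    refine ⟨g * (t + s), ?_⟩
    rw [evenCofactor, mul_add, hs, ht]
    push_cast
    ring

end

variable [CommRing R]

section

variable [DecompositionMonoid R]

theorem isRelPrime_succ_g (hG : IsFibonacciType d g G) (hdg : IsRelPrime d g) (n : ℕ) :
    IsRelPrime (G (n + 1)) g := by
  obtain ⟨t, ht⟩ := hG.exists_eq_pow_add_mul n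
  rw [ht, IsRelPrime.add_mul_left_left_iff]
  exact hdg.pow_left

theorem isRelPrime_succ (hG : IsFibonacciType d g G) (hdg : IsRelPrime d g) (n : ℕ) :
    IsRelPrime (G n) (G (n + 1)) := by
  induction n with
  | zero => simpa [hG.zero, hG.one] using isRelPrime_one_right
  | succ n ih =>
    rw [hG.add_two, IsRelPrime.mul_add_right_right_iff]
    exact (hG.isRelPrime_succ_g hdg n).mul_right ih.symm

theorem isRelPrime_odd_d (hG : IsFibonacciType d g G) (hdg : IsRelPrime d g) (k : ℕ) :
    IsRelPrime (G (2 * k + 1)) d := by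
  obtain ⟨t, ht⟩ := hG.exists_odd_eq_pow_add_mul k
  rw [ht, IsRelPrime.add_mul_left_left_iff]
  exact hdg.symm.pow_left

theorem isRelPrime_evenCofactor_odd (hG : IsFibonacciType d g G) (hdg : IsRelPrime d g)
    (k : ℕ) : IsRelPrime (evenCofactor g G k) (G (2 * k + 1)) :=
  (hG.isRelPrime_succ hdg (2 * k)).of_dvd_left (hG.evenCofactor_dvd k)

theorem isRelPrime_odd_evenCofactor_succ (hG : IsFibonacciType d g G) (hdg : IsRelPrime d g)
    (k : ℕ) : IsRelPrime (G (2 * k + 1)) (evenCofactor g G (k + 1)) :=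
  (hG.isRelPrime_succ hdg (2 * k + 1)).of_dvd_right (hG.evenCofactor_dvd (k + 1))

theorem isRelPrime_evenCofactor_succ (hG : IsFibonacciType d g G) (hdg : IsRelPrime d g)
    (k : ℕ) : IsRelPrime (evenCofactor g G k) (evenCofactor g G (k + 1)) := by
  rw [evenCofactor, IsRelPrime.add_mul_right_right_iff]
  exact hG.isRelPrime_evenCofactor_odd hdg k

theorem dvd_evenCofactor_iff (hG : IsFibonacciType d g G) (hdg : IsRelPrime d g) {q : R}
    (hq : q ∣ d) (k : ℕ) : q ∣ evenCofactor g G k ↔ q ∣ (k : R) := by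
  obtain ⟨s, hs⟩ := hG.exists_mul_evenCofactor_eq k
  have hqg : IsRelPrime q g := hdg.of_dvd_left hq
  calc q ∣ evenCofactor g G k ↔ q ∣ g * evenCofactor g G k :=
        ⟨(·.mul_left g), hqg.dvd_of_dvd_mul_left⟩
    _ ↔ q ∣ k * g ^ k := by rw [hs, dvd_add_left (hq.mul_right s)]
    _ ↔ q ∣ (k : R) := ⟨hqg.pow_right.dvd_of_dvd_mul_right, (·.mul_right _)⟩

end

theorem dvd_gcd_cofactors_iff [GCDMonoid R] (hG : IsFibonacciType d g G)
    (hdg : IsRelPrime d g) (x z : ℕ) {q : R} :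
    q ∣ gcd (gcd (evenCofactor g G x * G (2 * z + 1))
      (evenCofactor g G (x + 1) * evenCofactor g G z * d))
      (evenCofactor g G (z + 1) * G (2 * x + 1)) ↔
    q ∣ gcd (gcd d ((z + 1 : ℕ) : R)) (x : R) := by
  set u := evenCofactor g G
  set P := gcd (u x) (u (z + 1))
  set Q := gcd (G (2 * z + 1)) (G (2 * x + 1))
  have hPQ : Associated (gcd (u x * G (2 * z + 1)) (u (z + 1) * G (2 * x + 1))) (P * Q) :=
    associated_gcd_mul_mul (hG.isRelPrime_odd_evenCofactor_succ hdg z)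
      (hG.isRelPrime_evenCofactor_odd hdg x)
  have hPQ_coprime : IsRelPrime (P * Q) (u (x + 1) * u z) := by
    refine .mul_left (.mul_right ?_ ?_) (.mul_right ?_ ?_)
    · exact (hG.isRelPrime_evenCofactor_succ hdg x).of_dvd_left (gcd_dvd_left _ _)
    · exact (hG.isRelPrime_evenCofactor_succ hdg z).symm.of_dvd_left (gcd_dvd_right _ _)
    · exact (hG.isRelPrime_odd_evenCofactor_succ hdg x).of_dvd_left (gcd_dvd_right _ _)
    · exact (hG.isRelPrime_evenCofactor_odd hdg z).symm.of_dvd_left (gcd_dvd_left _ _)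
  have hQd : IsRelPrime Q d := (hG.isRelPrime_odd_d hdg x).of_dvd_left (gcd_dvd_right _ _)
  simp only [dvd_gcd_iff]
  constructor
  · rintro ⟨⟨hqA, hqB⟩, hqC⟩
    have hqPQ : q ∣ P * Q := hPQ.dvd_iff_dvd_right.mp (dvd_gcd hqA hqC)
    have hqd : q ∣ d := (hPQ_coprime.of_dvd_left hqPQ).dvd_of_dvd_mul_left hqB
    have hqP : q ∣ P := (hQd.symm.of_dvd_left hqd).dvd_of_dvd_mul_right hqPQ
    rw [dvd_gcd_iff, hG.dvd_evenCofactor_iff hdg hqd, hG.dvd_evenCofactor_iff hdg hqd] at hqP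
    exact ⟨⟨hqd, hqP.2⟩, hqP.1⟩
  · rintro ⟨⟨hqd, hqz⟩, hqx⟩
    rw [← hG.dvd_evenCofactor_iff hdg hqd] at hqz hqx
    exact ⟨⟨hqx.mul_right _, hqd.mul_left _⟩, hqz.mul_right _⟩

theorem associated_gcd_star_of_david [GCDMonoid R] (hG : IsFibonacciType d g G)
    (hdg : IsRelPrime d g) (x z : ℕ) :
    Associated
      (gcd (gcd (G (2 * x) * G (2 * z + 1)) (G (2 * x + 2) * G (2 * z)))
        (G (2 * x + 1) * G (2 * z + 2)))
      (d * gcd (gcd d ((z + 1 : ℕ) : R)) (x : R)) := by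
  set u := evenCofactor g G
  have hu : ∀ k, G (2 * k) = d * u k := hG.even_eq_mul_evenCofactor
  have hu' : ∀ k, G (2 * k + 2) = d * u (k + 1) := fun k => hu (k + 1)
  rw [hu, hu, hu', hu', show d * u x * G (2 * z + 1) = d * (u x * G (2 * z + 1)) by ring,
    show d * u (x + 1) * (d * u z) = d * (u (x + 1) * u z * d) by ring,
    show G (2 * x + 1) * (d * u (z + 1)) = d * (u (z + 1) * G (2 * x + 1)) by ring]
  exact ((gcd_mul_left' _ _ _).gcd (Associated.refl _)).trans ((gcd_mul_left' _ _ _).trans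
    (.mul_left d (associated_of_forall_dvd_iff fun _ => hG.dvd_gcd_cofactors_iff hdg x z)))

end IsFibonacciType

theorem star_of_david_fib_type_both_even_general (d g : Polynomial ℤ)
    (G : ℕ → Polynomial ℤ) (h0 : G 0 = 0) (h1 : G 1 = 1)
    (hrec : ∀ n : ℕ, 2 ≤ n → G n = d * G (n - 1) + g * G (n - 2))
    (hdg : IsUnit (gcd d g))
    (k₁ k₂ : ℕ) (hk₁ : 1 ≤ k₁) :
    Associated
      (gcd (gcd (G (2 * k₂) * G (2 * k₁ - 1)) (G (2 * k₂ + 2) * G (2 * k₁ - 2)))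
        (G (2 * k₂ + 1) * G (2 * k₁)))
      (d * gcd (gcd d (k₁ : Polynomial ℤ)) (k₂ : Polynomial ℤ)) ∧
    Associated
      (gcd (gcd (G (2 * k₂ + 1) * G (2 * k₁ - 2)) (G (2 * k₂) * G (2 * k₁)))
        (G (2 * k₂ + 2) * G (2 * k₁ - 1)))
      (d * gcd (gcd d ((k₁ - 1 : ℕ) : Polynomial ℤ)) ((k₂ + 1 : ℕ) : Polynomial ℤ)) ∧
    Associated
      (gcd (gcd d (k₁ : Polynomial ℤ)) (k₂ : Polynomial ℤ) *
        gcd (gcd (G (2 * k₂ + 1) * G (2 * k₁ - 2)) (G (2 * k₂) * G (2 * k₁)))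
          (G (2 * k₂ + 2) * G (2 * k₁ - 1)))
      (gcd (gcd d ((k₁ - 1 : ℕ) : Polynomial ℤ)) ((k₂ + 1 : ℕ) : Polynomial ℤ) *
        gcd (gcd (G (2 * k₂) * G (2 * k₁ - 1)) (G (2 * k₂ + 2) * G (2 * k₁ - 2)))
          (G (2 * k₂ + 1) * G (2 * k₁))) := by
  have hG : IsFibonacciType d g G := ⟨h0, h1, fun n => by simpa using hrec (n + 2) (by omega)⟩
  have hdg' : IsRelPrime d g := gcd_isUnit_iff_isRelPrime.mp hdg
  obtain ⟨j, rfl⟩ : ∃ j, k₁ = j + 1 := ⟨k₁ - 1, by omega⟩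
  rw [show 2 * (j + 1) - 1 = 2 * j + 1 by omega, show 2 * (j + 1) - 2 = 2 * j by omega,
    show 2 * (j + 1) = 2 * j + 2 by ring, Nat.add_sub_cancel]
  have hb := hG.associated_gcd_star_of_david hdg' k₂ j
  have ha := hG.associated_gcd_star_of_david hdg' j k₂
  rw [mul_comm (G (2 * j)), mul_comm (G (2 * j + 2)), mul_comm (G (2 * j + 1)), gcd_assoc d,
    gcd_comm ((k₂ + 1 : ℕ) : Polynomial ℤ), ← gcd_assoc] at ha
  refine ⟨hb, ha, ?_⟩
  calc Associated _ (_ * (d * _)) := ha.mul_left _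
    _ = _ * (d * _) := by ring
    Associated _ _ := (hb.mul_left _).symm

theorem star_of_david_fib_type_both_even (d g : Polynomial ℤ) (hd : d ≠ 0) (hg : g ≠ 0)
    (G : ℕ → Polynomial ℤ) (h0 : G 0 = 0) (h1 : G 1 = 1)
    (hrec : ∀ n : ℕ, 2 ≤ n → G n = d * G (n - 1) + g * G (n - 2))
    (hdg : IsUnit (gcd d g))
    (k₁ k₂ : ℕ) (hk₁ : 1 ≤ k₁) (hk₂ : 1 ≤ k₂) :
    Associated
      (gcd (gcd (G (2 * k₂) * G (2 * k₁ - 1)) (G (2 * k₂ + 2) * G (2 * k₁ - 2)))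
        (G (2 * k₂ + 1) * G (2 * k₁)))
      (d * gcd (gcd d (k₁ : Polynomial ℤ)) (k₂ : Polynomial ℤ)) ∧
    Associated
      (gcd (gcd (G (2 * k₂ + 1) * G (2 * k₁ - 2)) (G (2 * k₂) * G (2 * k₁)))
        (G (2 * k₂ + 2) * G (2 * k₁ - 1)))
      (d * gcd (gcd d ((k₁ - 1 : ℕ) : Polynomial ℤ)) ((k₂ + 1 : ℕ) : Polynomial ℤ)) ∧
    Associated
      (gcd (gcd d (k₁ : Polynomial ℤ)) (k₂ : Polynomial ℤ) *
        gcd (gcd (G (2 * k₂ + 1) * G (2 * k₁ - 2)) (G (2 * k₂) * G (2 * k₁)))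
          (G (2 * k₂ + 2) * G (2 * k₁ - 1)))
      (gcd (gcd d ((k₁ - 1 : ℕ) : Polynomial ℤ)) ((k₂ + 1 : ℕ) : Polynomial ℤ) *
        gcd (gcd (G (2 * k₂) * G (2 * k₁ - 1)) (G (2 * k₂ + 2) * G (2 * k₁ - 2)))
          (G (2 * k₂ + 1) * G (2 * k₁))) :=
  star_of_david_fib_type_both_even_general d g G h0 h1 hrec hdg k₁ k₂ hk₁
end

section
/- Let G be a GFP sequence of Fibonacci type with gcd(d, g) a unit, and let m ≥ 1 and n ≥ 2 be integers that are not both even. Then gcd(a₁, a₂, a₃) and gcd(b₁, b₂, b₃) are both units of ℤ[x]; in particular gcd(a₁, a₂, a₃) is associated to gcd(b₁, b₂, b₃). -/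
open Polynomial

theorem star_of_david_fib_type_not_both_even (d g : Polynomial ℤ) (hd : d ≠ 0) (hg : g ≠ 0)
    (G : ℕ → Polynomial ℤ) (h0 : G 0 = 0) (h1 : G 1 = 1)
    (hrec : ∀ n : ℕ, 2 ≤ n → G n = d * G (n - 1) + g * G (n - 2))
    (hdg : IsUnit (gcd d g))
    (m n : ℕ) (hm : 1 ≤ m) (hn : 2 ≤ n) (hpar : ¬(Even m ∧ Even n)) :
    IsUnit (gcd (gcd (G (m + 1) * G (n - 2)) (G m * G n)) (G (m + 2) * G (n - 1))) ∧
    IsUnit (gcd (gcd (G m * G (n - 1)) (G (m + 2) * G (n - 2))) (G (m + 1) * G n)) ∧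
    Associated
      (gcd (gcd (G (m + 1) * G (n - 2)) (G m * G n)) (G (m + 2) * G (n - 1)))
      (gcd (gcd (G m * G (n - 1)) (G (m + 2) * G (n - 2))) (G (m + 1) * G n)) := by
  obtain ⟨j, rfl⟩ : ∃ j, m = j + 1 := ⟨m - 1, by omega⟩
  obtain ⟨k, rfl⟩ : ∃ k, n = k + 2 := ⟨n - 2, by omega⟩
  -- consecutive terms share no prime factor
  have hcons : ∀ p : Polynomial ℤ, Prime p → ∀ t, p ∣ G t → p ∣ G (t + 1) → False := by
    intro p hp t
    induction t using Nat.strong_induction_on with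
    | _ t ih =>
      match t, ih with
      | 0, _ =>
        intro _ h2'
        rw [h1] at h2'
        exact hp.not_unit (isUnit_of_dvd_one h2')
      | 1, _ =>
        intro h1' _
        rw [h1] at h1'
        exact hp.not_unit (isUnit_of_dvd_one h1')
      | (t + 2), ih =>
        intro h1' h2'
        have hr : G (t + 3) = d * G (t + 2) + g * G (t + 1) := by
          have := hrec (t + 3) (by omega)
          have e1 : t + 3 - 1 = t + 2 := by omega
          have e2 : t + 3 - 2 = t + 1 := by omega
          rwa [e1, e2] at this
        have hgG : p ∣ g * G (t + 1) := by
          have : p ∣ G (t + 3) - d * G (t + 2) := dvd_sub h2' (h1'.mul_left d)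
          rwa [hr, add_sub_cancel_left] at this
        rcases hp.dvd_mul.mp hgG with hpg | hpG
        · have hr2 : G (t + 2) = d * G (t + 1) + g * G t := by
            have := hrec (t + 2) (by omega)
            have e1 : t + 2 - 1 = t + 1 := by omega
            have e2 : t + 2 - 2 = t := by omega
            rwa [e1, e2] at this
          have hdG : p ∣ d * G (t + 1) := by
            have : p ∣ G (t + 2) - g * G t := dvd_sub h1' (hpg.mul_right (G t))
            rwa [hr2, add_sub_cancel_right] at this
          rcases hp.dvd_mul.mp hdG with hpd | hpG1
          · exact hp.not_unit (isUnit_of_dvd_unit (dvd_gcd hpd hpg) hdg)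
          · exact ih (t + 1) (by omega) hpG1 h1'
        · exact ih (t + 1) (by omega) hpG h1'
  -- a prime dividing G t and G (t+2) divides d
  have hgap : ∀ p : Polynomial ℤ, Prime p → ∀ t, p ∣ G t → p ∣ G (t + 2) → p ∣ d := by
    intro p hp t h1' h2'
    have hr : G (t + 2) = d * G (t + 1) + g * G t := by
      have := hrec (t + 2) (by omega)
      have e1 : t + 2 - 1 = t + 1 := by omega
      have e2 : t + 2 - 2 = t := by omega
      rwa [e1, e2] at this
    have hdG : p ∣ d * G (t + 1) := by
      have : p ∣ G (t + 2) - g * G t := dvd_sub h2' (h1'.mul_left g)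
      rwa [hr, add_sub_cancel_right] at this
    rcases hp.dvd_mul.mp hdG with h | h
    · exact h
    · exact (hcons p hp (t + 1) h h2').elim
  -- a prime dividing d never divides an odd-indexed term
  have hnodd : ∀ p : Polynomial ℤ, Prime p → p ∣ d → ∀ r : ℕ, ¬ p ∣ G (2 * r + 1) := by
    intro p hp hpd
    have hpg : ¬ p ∣ g := fun hpg =>
      hp.not_unit (isUnit_of_dvd_unit (dvd_gcd hpd hpg) hdg)
    intro r
    induction r with
    | zero =>
      intro ht
      rw [show 2 * 0 + 1 = 1 from rfl, h1] at ht
      exact hp.not_unit (isUnit_of_dvd_one ht)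
    | succ r ih =>
      intro ht
      have hr : G (2 * (r + 1) + 1) = d * G (2 * r + 2) + g * G (2 * r + 1) := by
        have := hrec (2 * (r + 1) + 1) (by omega)
        have e1 : 2 * (r + 1) + 1 - 1 = 2 * r + 2 := by omega
        have e2 : 2 * (r + 1) + 1 - 2 = 2 * r + 1 := by omega
        rwa [e1, e2] at this
      have hgG : p ∣ g * G (2 * r + 1) := by
        have : p ∣ G (2 * (r + 1) + 1) - d * G (2 * r + 2) :=
          dvd_sub ht (hpd.mul_right _)
        rwa [hr, add_sub_cancel_left] at this
      rcases hp.dvd_mul.mp hgG with h | h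
      · exact hpg h
      · exact ih h
  have hodd : ∀ p : Polynomial ℤ, Prime p → p ∣ d → ∀ t, p ∣ G t → Even t := by
    intro p hp hpd t ht
    by_contra hOdd
    rw [Nat.not_even_iff_odd] at hOdd
    obtain ⟨r, hr⟩ := hOdd
    exact hnodd p hp hpd r (hr ▸ ht)
  -- reduce IsUnit of a triple gcd to "no common prime"
  have key : ∀ a b c : Polynomial ℤ,
      (∀ p : Polynomial ℤ, Prime p → p ∣ a → p ∣ b → p ∣ c → False) →
      IsUnit (gcd (gcd a b) c) := by
    intro a b c h
    by_contra hu
    rcases eq_or_ne (gcd (gcd a b) c) 0 with h0' | h0'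
    · rw [gcd_eq_zero_iff, gcd_eq_zero_iff] at h0'
      exact h X Polynomial.prime_X (by simp [h0'.1.1]) (by simp [h0'.1.2]) (by simp [h0'.2])
    · obtain ⟨q, hq, hdvd⟩ := WfDvdMonoid.exists_irreducible_factor hu h0'
      exact h q hq.prime
        (hdvd.trans ((gcd_dvd_left _ _).trans (gcd_dvd_left _ _)))
        (hdvd.trans ((gcd_dvd_left _ _).trans (gcd_dvd_right _ _)))
        (hdvd.trans (gcd_dvd_right _ _))
  have evparity : ∀ a : ℕ, Even a → Even (a + 2) := by
    intro a ⟨r, hr⟩; exact ⟨r + 1, by omega⟩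
  have hA : IsUnit (gcd (gcd (G (j + 1 + 1) * G (k + 2 - 2)) (G (j + 1) * G (k + 2)))
      (G (j + 1 + 2) * G (k + 2 - 1))) := by
    apply key
    intro p hp ha1 ha2 ha3
    have ha1 : p ∣ G (j + 2) * G k := ha1
    have ha3 : p ∣ G (j + 3) * G (k + 1) := ha3
    rcases hp.dvd_mul.mp ha2 with hj1 | hk2
    · rcases hp.dvd_mul.mp ha1 with hj2 | hkk
      · exact hcons p hp (j + 1) hj1 hj2
      · rcases hp.dvd_mul.mp ha3 with hj3 | hk1
        · have hpd : p ∣ d := hgap p hp (j + 1) hj1 hj3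
          have hej : Even (j + 1) := hodd p hp hpd (j + 1) hj1
          have hek : Even k := hodd p hp hpd k hkk
          exact hpar ⟨hej, evparity k hek⟩
        · exact hcons p hp k hkk hk1
    · rcases hp.dvd_mul.mp ha1 with hj2 | hkk
      · rcases hp.dvd_mul.mp ha3 with hj3 | hk1
        · exact hcons p hp (j + 2) hj2 hj3
        · exact hcons p hp (k + 1) hk1 hk2
      · have hpd : p ∣ d := hgap p hp k hkk hk2
        have hek : Even k := hodd p hp hpd k hkk
        rcases hp.dvd_mul.mp ha3 with hj3 | hk1
        · have hej3 : Even (j + 3) := hodd p hp hpd (j + 3) hj3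
          obtain ⟨r, hr⟩ := hej3
          have hej : Even (j + 1) := ⟨r - 1, by omega⟩
          exact hpar ⟨hej, evparity k hek⟩
        · exact hcons p hp k hkk hk1
  have hB : IsUnit (gcd (gcd (G (j + 1) * G (k + 2 - 1)) (G (j + 1 + 2) * G (k + 2 - 2)))
      (G (j + 1 + 1) * G (k + 2))) := by
    apply key
    intro p hp hb1 hb2 hb3
    have hb1 : p ∣ G (j + 1) * G (k + 1) := hb1
    have hb2 : p ∣ G (j + 3) * G k := hb2
    rcases hp.dvd_mul.mp hb3 with hj2 | hk2
    · rcases hp.dvd_mul.mp hb1 with hj1 | hk1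
      · exact hcons p hp (j + 1) hj1 hj2
      · rcases hp.dvd_mul.mp hb2 with hj3 | hkk
        · exact hcons p hp (j + 2) hj2 hj3
        · exact hcons p hp k hkk hk1
    · rcases hp.dvd_mul.mp hb1 with hj1 | hk1
      · rcases hp.dvd_mul.mp hb2 with hj3 | hkk
        · have hpd : p ∣ d := hgap p hp (j + 1) hj1 hj3
          have hej : Even (j + 1) := hodd p hp hpd (j + 1) hj1
          have hek2 : Even (k + 2) := hodd p hp hpd (k + 2) hk2
          exact hpar ⟨hej, hek2⟩
        · have hpd : p ∣ d := hgap p hp k hkk hk2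
          have hej : Even (j + 1) := hodd p hp hpd (j + 1) hj1
          have hek : Even k := hodd p hp hpd k hkk
          exact hpar ⟨hej, evparity k hek⟩
      · exact hcons p hp (k + 1) hk1 hk2
  exact ⟨hA, hB, ((associated_one_iff_isUnit.mpr hA).trans
    (associated_one_iff_isUnit.mpr hB).symm)⟩
end

section
/- Let G be a GFP sequence of Lucas type such that gcd(p₀, p₁), gcd(p₀, d), gcd(p₀, g), and gcd(d, g) are units, and let n = 2k₁+1 and m = 2k₂+1 with k₁ ≥ 1 and k₂ ≥ 0 (so n ≥ 3 and m ≥ 1 are both odd). Then gcd(b₁, b₂, b₃) is associated to G(1) · gcd(G(1), n, m) and gcd(a₁, a₂, a₃) is associated to G(1) · gcd(G(1), n−2, m+2), where the integers n, m, n−2, m+2 are regarded as constant polynomials in ℤ[x]. -/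
open Polynomial

set_option maxHeartbeats 1000000
set_option synthInstance.maxHeartbeats 1000000

noncomputable def Aseq (d g : Polynomial ℤ) : ℕ → Polynomial ℤ
  | 0 => 1
  | 1 => d^2 + 3*g
  | (j+2) => (d^2 + 2*g) * Aseq d g (j+1) - g^2 * Aseq d g j

lemma Aseq_zero (d g : Polynomial ℤ) : Aseq d g 0 = 1 := rfl
lemma Aseq_one (d g : Polynomial ℤ) : Aseq d g 1 = d^2 + 3*g := rfl
lemma Aseq_two (d g : Polynomial ℤ) (j : ℕ) :
    Aseq d g (j+2) = (d^2 + 2*g) * Aseq d g (j+1) - g^2 * Aseq d g j := rfl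

lemma assoc_gcd3 (a x y z : Polynomial ℤ) :
    Associated (gcd (gcd (a*x) (a*y)) (a*z)) (a * gcd (gcd x y) z) := by
  apply associated_of_dvd_dvd
  · have e1 : gcd (a*x) (a*y) ∣ a * gcd x y := by
      rw [gcd_mul_left]
      exact ((normalize_associated a).mul_right (gcd x y)).dvd
    have e2 : gcd (a * gcd x y) (a*z) ∣ a * gcd (gcd x y) z := by
      rw [gcd_mul_left]
      exact ((normalize_associated a).mul_right _).dvd
    have h1 : gcd (gcd (a*x) (a*y)) (a*z) ∣ a * gcd x y :=
      (gcd_dvd_left _ _).trans e1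
    exact (dvd_gcd h1 (gcd_dvd_right _ _)).trans e2
  · refine dvd_gcd (dvd_gcd ?_ ?_) ?_
    · exact mul_dvd_mul_left a ((gcd_dvd_left _ _).trans (gcd_dvd_left _ _))
    · exact mul_dvd_mul_left a ((gcd_dvd_left _ _).trans (gcd_dvd_right _ _))
    · exact mul_dvd_mul_left a (gcd_dvd_right _ _)

theorem star_of_david_lucas_type_both_odd (d g : Polynomial ℤ) (hd : d ≠ 0) (hg : g ≠ 0)
    (G : ℕ → Polynomial ℤ) (p₀ : ℤ) (h0 : G 0 = C p₀) (hp₀ : p₀ ≠ 0) (h1 : G 1 ≠ 0)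
    (hLucas : 2 * G 1 = G 0 * d)
    (hrec : ∀ n : ℕ, 2 ≤ n → G n = d * G (n - 1) + g * G (n - 2))
    (hgcd1 : IsUnit (gcd (G 0) (G 1))) (hgcd2 : IsUnit (gcd (G 0) d))
    (hgcd3 : IsUnit (gcd (G 0) g)) (hgcd4 : IsUnit (gcd d g))
    (k₁ k₂ : ℕ) (hk₁ : 1 ≤ k₁) :
    Associated
      (gcd (gcd (G (2 * k₂ + 1) * G (2 * k₁)) (G (2 * k₂ + 3) * G (2 * k₁ - 1)))
        (G (2 * k₂ + 2) * G (2 * k₁ + 1)))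
      (G 1 * gcd (gcd (G 1) ((2 * k₁ + 1 : ℕ) : Polynomial ℤ)) ((2 * k₂ + 1 : ℕ) : Polynomial ℤ)) ∧
    Associated
      (gcd (gcd (G (2 * k₂ + 2) * G (2 * k₁ - 1)) (G (2 * k₂ + 1) * G (2 * k₁ + 1)))
        (G (2 * k₂ + 3) * G (2 * k₁)))
      (G 1 * gcd (gcd (G 1) ((2 * k₁ - 1 : ℕ) : Polynomial ℤ)) ((2 * k₂ + 3 : ℕ) : Polynomial ℤ)) := by
  have hrec2 : ∀ k : ℕ, G (k+2) = d * G (k+1) + g * G k := by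
    intro k
    have h := hrec (k+2) (by omega)
    simpa using h
  have hdg : IsRelPrime d g := fun t h1 h2 => isUnit_of_dvd_unit (dvd_gcd h1 h2) hgcd4
  have hG0g : IsRelPrime (G 0) g := fun t h1 h2 => isUnit_of_dvd_unit (dvd_gcd h1 h2) hgcd3
  have hG1p : IsRelPrime (G 1) (C p₀) := fun t ht1 ht2 =>
    isUnit_of_dvd_unit (dvd_gcd (by rw [h0]; exact ht2) ht1) hgcd1
  have hG1g : IsRelPrime (G 1) g := by
    intro t ht1 ht2
    have hdvd : t ∣ C p₀ * d := by
      refine ht1.trans ⟨2, ?_⟩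
      linear_combination -hLucas - d * h0
    obtain ⟨t1, t2, h1', h2', rfl⟩ := exists_dvd_and_dvd_of_dvd_mul hdvd
    exact (hG0g (by rw [h0]; exact h1') ((dvd_mul_right t1 t2).trans ht2)).mul
      (hdg h2' ((dvd_mul_left t2 t1).trans ht2))
  have hGgpair : ∀ k, IsRelPrime (G k) g ∧ IsRelPrime (G (k+1)) g := by
    intro k
    induction k with
    | zero => exact ⟨hG0g, hG1g⟩
    | succ k ih =>
      refine ⟨ih.2, fun t ht1 ht2 => ?_⟩
      have hdd : t ∣ d * G (k+1) := by
        have e : d * G (k+1) = G (k+2) - g * G k := by linear_combination -(hrec2 k)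
        rw [e]; exact dvd_sub ht1 (dvd_mul_of_dvd_left ht2 _)
      obtain ⟨t1, t2, h1', h2', rfl⟩ := exists_dvd_and_dvd_of_dvd_mul hdd
      exact (hdg h1' ((dvd_mul_right t1 t2).trans ht2)).mul
        (ih.2 h2' ((dvd_mul_left t2 t1).trans ht2))
  have hcons : ∀ k, IsRelPrime (G k) (G (k+1)) := by
    intro k
    induction k with
    | zero => exact fun t ht1 ht2 => isUnit_of_dvd_unit (dvd_gcd ht1 ht2) hgcd1
    | succ k ih =>
      intro t ht1 ht2
      have h3 : t ∣ g * G k := by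
        have e : g * G k = G (k+2) - d * G (k+1) := by linear_combination -(hrec2 k)
        rw [e]; exact dvd_sub ht2 (dvd_mul_of_dvd_right ht1 d)
      have h4 : IsRelPrime t g := fun s hs1 hs2 => (hGgpair (k+1)).1 (hs1.trans ht1) hs2
      exact ih (h4.dvd_of_dvd_mul_left h3) ht1
  have hstep : ∀ k, G (k+4) = (d^2+2*g) * G (k+2) - g^2 * G k := by
    intro k
    have a1 : G (k+4) = d * G (k+3) + g * G (k+2) := hrec2 (k+2)
    have a2 : G (k+3) = d * G (k+2) + g * G (k+1) := hrec2 (k+1)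
    have a3 : G (k+2) = d * G (k+1) + g * G k := hrec2 k
    linear_combination a1 + d * a2 - g * a3
  -- G 1 divides d^2
  obtain ⟨w, hw⟩ : G 1 ∣ d^2 := by
    have hdvd : G 1 ∣ C p₀ * d^2 := ⟨2*d, by linear_combination -(d * hLucas) - d^2 * h0⟩
    exact hG1p.dvd_of_dvd_mul_left hdvd
  -- odd-index factorization
  have hoddpair : ∀ j, G (2*j+1) = G 1 * Aseq d g j ∧ G (2*j+3) = G 1 * Aseq d g (j+1) := by
    intro j
    induction j with
    | zero =>
      constructor
      · rw [Aseq_zero]; ring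
      · have a2 : G 2 = d * G 1 + g * G 0 := hrec2 0
        have a3 : G 3 = d * G 2 + g * G 1 := hrec2 1
        rw [Aseq_one]
        linear_combination a3 + d * a2 - g * hLucas
    | succ j ih =>
      refine ⟨ih.2, ?_⟩
      have a : G (2*j+5) = (d^2+2*g) * G (2*j+3) - g^2 * G (2*j+1) := hstep (2*j+1)
      have goal' : G (2*j+5) = G 1 * Aseq d g (j+2) := by
        rw [Aseq_two]
        linear_combination a + (d^2+2*g) * ih.2 - g^2 * ih.1
      exact goal'
  have hodd : ∀ j, G (2*j+1) = G 1 * Aseq d g j := fun j => (hoddpair j).1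
  have hAdvd : ∀ a, Aseq d g a ∣ G (2*a+1) := fun a => ⟨G 1, by rw [hodd a]; ring⟩
  have hAg : ∀ a, IsRelPrime (Aseq d g a) g := fun a t h1' h2' =>
    (hGgpair (2*a+1)).1 (h1'.trans (hAdvd a)) h2'
  -- consecutive A's coprime
  have hAcons : ∀ j, IsRelPrime (Aseq d g j) (Aseq d g (j+1)) := by
    intro j
    induction j with
    | zero => rw [Aseq_zero]; exact isRelPrime_one_left
    | succ j ih =>
      intro t ht1 ht2
      have h3 : t ∣ g^2 * Aseq d g j := by
        have e : g^2 * Aseq d g j = (d^2+2*g) * Aseq d g (j+1) - Aseq d g (j+2) := by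
          rw [Aseq_two]; ring
        rw [e]; exact dvd_sub (dvd_mul_of_dvd_right ht1 _) ht2
      have h4 : IsRelPrime t (g^2) :=
        IsRelPrime.pow_right (fun s hs1 hs2 => hAg (j+1) (hs1.trans ht1) hs2)
      exact ih (h4.dvd_of_dvd_mul_left h3) ht1
  -- congruence of Aseq mod G 1
  have hApair : ∀ j, (∃ s, Aseq d g j = ((2*j+1 : ℕ) : Polynomial ℤ) * g^j + G 1 * s) ∧
      (∃ s, Aseq d g (j+1) = ((2*(j+1)+1 : ℕ) : Polynomial ℤ) * g^(j+1) + G 1 * s) := by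
    intro j
    induction j with
    | zero =>
      constructor
      · exact ⟨0, by rw [Aseq_zero]; push_cast; ring⟩
      · refine ⟨w, ?_⟩
        rw [Aseq_one]; push_cast
        linear_combination hw
    | succ j ih =>
      obtain ⟨⟨s0, hs0⟩, ⟨s1, hs1⟩⟩ := ih
      refine ⟨⟨s1, hs1⟩, ?_⟩
      refine ⟨(2*(j:Polynomial ℤ)+5) * g^(j+2) * 0 + ((2*(j:ℕ)+3 : ℕ) : Polynomial ℤ) * g^(j+1) * w
        + (d^2+2*g) * s1 - g^2 * s0, ?_⟩
      rw [Aseq_two, hs0, hs1]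
      push_cast
      linear_combination (((2:Polynomial ℤ)*(j:Polynomial ℤ)+3) * g^(j+1)) * hw
  have hA : ∀ j, ∃ s, Aseq d g j = ((2*j+1 : ℕ) : Polynomial ℤ) * g^j + G 1 * s :=
    fun j => (hApair j).1
  -- congruence of even-indexed G mod G 1
  have hEpair : ∀ i, (∃ s, G (2*i) = C p₀ * g^i + G 1 * s) ∧
      (∃ s, G (2*(i+1)) = C p₀ * g^(i+1) + G 1 * s) := by
    intro i
    induction i with
    | zero =>
      constructor
      · exact ⟨0, by rw [show (2*0 : ℕ) = 0 from rfl, h0]; ring⟩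
      · refine ⟨d, ?_⟩
        have a2 : G 2 = d * G 1 + g * G 0 := hrec2 0
        show G 2 = C p₀ * g^(0+1) + G 1 * d
        linear_combination a2 + g * h0
    | succ i ih =>
      obtain ⟨⟨s0, hs0⟩, ⟨s1, hs1⟩⟩ := ih
      refine ⟨⟨s1, hs1⟩, ?_⟩
      refine ⟨C p₀ * g^(i+1) * w + (d^2+2*g) * s1 - g^2 * s0, ?_⟩
      have a : G (2*i+4) = (d^2+2*g) * G (2*i+2) - g^2 * G (2*i) := hstep (2*i)
      have hs1' : G (2*i+2) = C p₀ * g^(i+1) + G 1 * s1 := hs1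
      show G (2*i+4) = C p₀ * g^(i+2) + G 1 * _
      linear_combination a + (d^2+2*g) * hs1' - g^2 * hs0 + C p₀ * g^(i+1) * hw
  have hE : ∀ i, ∃ s, G (2*i) = C p₀ * g^i + G 1 * s := fun i => (hEpair i).1
  -- main lemma
  have main : ∀ j i : ℕ, Associated
      (gcd (gcd (G (2*j+1) * G (2*i+2)) (G (2*j+3) * G (2*i+1))) (G (2*j+2) * G (2*i+3)))
      (G 1 * gcd (gcd (G 1) ((2*i+3 : ℕ) : Polynomial ℤ)) ((2*j+1 : ℕ) : Polynomial ℤ)) := by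
    intro j i
    obtain ⟨s0, hs0⟩ := hA j
    obtain ⟨s3', hs3pre⟩ := hA (i+1)
    have hs3 : Aseq d g (i+1) = ((2*i+3 : ℕ) : Polynomial ℤ) * g^(i+1) + G 1 * s3' := hs3pre
    obtain ⟨t1, ht1pre⟩ := hE (i+1)
    have ht1 : G (2*i+2) = C p₀ * g^(i+1) + G 1 * t1 := ht1pre
    obtain ⟨t2, ht2pre⟩ := hE (j+1)
    have ht2 : G (2*j+2) = C p₀ * g^(j+1) + G 1 * t2 := ht2pre
    have r1 : G (2*j+1) * G (2*i+2) = G 1 * (Aseq d g j * G (2*i+2)) := by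
      rw [hodd j]; ring
    have r2 : G (2*j+3) * G (2*i+1) = G 1 * (G 1 * (Aseq d g (j+1) * Aseq d g i)) := by
      have o1 : G (2*j+3) = G 1 * Aseq d g (j+1) := hodd (j+1)
      have o2 : G (2*i+1) = G 1 * Aseq d g i := hodd i
      rw [o1, o2]; ring
    have r3 : G (2*j+2) * G (2*i+3) = G 1 * (G (2*j+2) * Aseq d g (i+1)) := by
      have o3 : G (2*i+3) = G 1 * Aseq d g (i+1) := hodd (i+1)
      rw [o3]; ring
    rw [r1, r2, r3]
    refine (assoc_gcd3 (G 1) _ _ _).trans (Associated.mul_left (G 1) ?_)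
    set X := Aseq d g j * G (2*i+2) with hX
    set Y := G 1 * (Aseq d g (j+1) * Aseq d g i) with hY
    set Z := G (2*j+2) * Aseq d g (i+1) with hZ
    apply associated_of_dvd_dvd
    · -- e ∣ c
      have heX : gcd (gcd X Y) Z ∣ X := (gcd_dvd_left _ _).trans (gcd_dvd_left _ _)
      have heY : gcd (gcd X Y) Z ∣ Y := (gcd_dvd_left _ _).trans (gcd_dvd_right _ _)
      have heZ : gcd (gcd X Y) Z ∣ Z := gcd_dvd_right _ _
      have hrp1 : IsRelPrime (gcd (gcd X Y) Z) (Aseq d g (j+1)) := by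
        intro t ht htA
        have htX : t ∣ X := ht.trans heX
        have htZ : t ∣ Z := ht.trans heZ
        have h5 : IsRelPrime t (Aseq d g j) := fun s hs1 hs2 =>
          hAcons j hs2 (hs1.trans htA)
        have h6 : t ∣ G (2*i+2) := h5.dvd_of_dvd_mul_left htX
        have h7 : IsRelPrime t (G (2*j+2)) := fun s hs1 hs2 =>
          hcons (2*j+2) hs2 ((hs1.trans htA).trans (hAdvd (j+1)))
        have h8 : t ∣ Aseq d g (i+1) := h7.dvd_of_dvd_mul_left htZ
        exact hcons (2*i+2) h6 (h8.trans (hAdvd (i+1)))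
      have hrp2 : IsRelPrime (gcd (gcd X Y) Z) (Aseq d g i) := by
        intro t ht htA
        have htX : t ∣ X := ht.trans heX
        have htZ : t ∣ Z := ht.trans heZ
        have h5 : IsRelPrime t (Aseq d g (i+1)) := fun s hs1 hs2 =>
          hAcons i (hs1.trans htA) hs2
        have h6 : t ∣ G (2*j+2) := h5.dvd_of_dvd_mul_right htZ
        have h7 : IsRelPrime t (G (2*i+2)) := fun s hs1 hs2 =>
          hcons (2*i+1) ((hs1.trans htA).trans (hAdvd i)) hs2
        have h8 : t ∣ Aseq d g j := h7.dvd_of_dvd_mul_right htX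
        exact hcons (2*j+1) (h8.trans (hAdvd j)) h6
      have heG1 : gcd (gcd X Y) Z ∣ G 1 := (hrp1.mul_right hrp2).dvd_of_dvd_mul_right heY
      have hrpg : IsRelPrime (gcd (gcd X Y) Z) g := fun t ht htg =>
        hG1g (ht.trans heG1) htg
      have hrpp : IsRelPrime (gcd (gcd X Y) Z) (C p₀) := fun t ht htp =>
        hG1p (ht.trans heG1) htp
      have h9 : gcd (gcd X Y) Z ∣ ((2*j+1 : ℕ) : Polynomial ℤ) * C p₀ * (g^j * g^(i+1)) := by
        have key : ((2*j+1 : ℕ) : Polynomial ℤ) * C p₀ * (g^j * g^(i+1))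
            = X - G 1 * (s0 * (C p₀ * g^(i+1)) + ((2*j+1 : ℕ) : Polynomial ℤ) * g^j * t1
              + G 1 * (s0 * t1)) := by
          rw [hX, hs0, ht1]; ring
        rw [key]
        exact dvd_sub heX (heG1.mul_right _)
      have h10 : gcd (gcd X Y) Z ∣ ((2*j+1 : ℕ) : Polynomial ℤ) * C p₀ :=
        (hrpg.pow_right.mul_right hrpg.pow_right).dvd_of_dvd_mul_right h9
      have h11 : gcd (gcd X Y) Z ∣ ((2*j+1 : ℕ) : Polynomial ℤ) :=
        hrpp.dvd_of_dvd_mul_right h10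
      have h12 : gcd (gcd X Y) Z ∣ ((2*i+3 : ℕ) : Polynomial ℤ) := by
        have key : ((2*i+3 : ℕ) : Polynomial ℤ) * C p₀ * (g^(j+1) * g^(i+1))
            = Z - G 1 * (t2 * (((2*i+3 : ℕ) : Polynomial ℤ) * g^(i+1))
              + C p₀ * g^(j+1) * s3' + G 1 * (t2 * s3')) := by
          rw [hZ, ht2, hs3]; ring
        have h9' : gcd (gcd X Y) Z ∣ ((2*i+3 : ℕ) : Polynomial ℤ) * C p₀ * (g^(j+1) * g^(i+1)) := by
          rw [key]; exact dvd_sub heZ (heG1.mul_right _)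
        exact hrpp.dvd_of_dvd_mul_right
          ((hrpg.pow_right.mul_right hrpg.pow_right).dvd_of_dvd_mul_right h9')
      exact dvd_gcd (dvd_gcd heG1 h12) h11
    · -- c ∣ e
      have hc1 : gcd (gcd (G 1) ((2*i+3 : ℕ) : Polynomial ℤ)) ((2*j+1 : ℕ) : Polynomial ℤ) ∣ G 1 :=
        (gcd_dvd_left _ _).trans (gcd_dvd_left _ _)
      have hcn : gcd (gcd (G 1) ((2*i+3 : ℕ) : Polynomial ℤ)) ((2*j+1 : ℕ) : Polynomial ℤ)
          ∣ ((2*i+3 : ℕ) : Polynomial ℤ) := (gcd_dvd_left _ _).trans (gcd_dvd_right _ _)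
      have hcm : gcd (gcd (G 1) ((2*i+3 : ℕ) : Polynomial ℤ)) ((2*j+1 : ℕ) : Polynomial ℤ)
          ∣ ((2*j+1 : ℕ) : Polynomial ℤ) := gcd_dvd_right _ _
      have hcAj : gcd (gcd (G 1) ((2*i+3 : ℕ) : Polynomial ℤ)) ((2*j+1 : ℕ) : Polynomial ℤ)
          ∣ Aseq d g j := by
        rw [hs0]; exact dvd_add (hcm.mul_right _) (hc1.mul_right _)
      have hcAi1 : gcd (gcd (G 1) ((2*i+3 : ℕ) : Polynomial ℤ)) ((2*j+1 : ℕ) : Polynomial ℤ)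
          ∣ Aseq d g (i+1) := by
        rw [hs3]; exact dvd_add (hcn.mul_right _) (hc1.mul_right _)
      exact dvd_gcd (dvd_gcd (dvd_mul_of_dvd_left hcAj _) (hc1.mul_right _))
        (dvd_mul_of_dvd_right hcAi1 _)
  constructor
  · have H := main k₂ (k₁ - 1)
    rw [show 2*(k₁-1)+2 = 2*k₁ from by omega, show 2*(k₁-1)+1 = 2*k₁-1 from by omega,
      show 2*(k₁-1)+3 = 2*k₁+1 from by omega] at H
    exact H
  · have H := main (k₁ - 1) k₂
    rw [show 2*(k₁-1)+1 = 2*k₁-1 from by omega, show 2*(k₁-1)+3 = 2*k₁+1 from by omega,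
      show 2*(k₁-1)+2 = 2*k₁ from by omega, show 2*k₂+2 = 2*k₂+2 from rfl] at H
    rw [mul_comm (G (2*k₂+2)) (G (2*k₁-1)), mul_comm (G (2*k₂+1)) (G (2*k₁+1)),
      mul_comm (G (2*k₂+3)) (G (2*k₁))]
    have hswap : gcd (gcd (G 1) ((2*k₁-1 : ℕ) : Polynomial ℤ)) ((2*k₂+3 : ℕ) : Polynomial ℤ)
        = gcd (gcd (G 1) ((2*k₂+3 : ℕ) : Polynomial ℤ)) ((2*k₁-1 : ℕ) : Polynomial ℤ) := by
      rw [gcd_assoc, gcd_assoc, gcd_comm ((2*k₁-1 : ℕ) : Polynomial ℤ)]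
    rw [hswap]
    exact H
end

section
/- Let G be a GFP sequence of Lucas type such that gcd(p₀, p₁), gcd(p₀, d), gcd(p₀, g), and gcd(d, g) are units, and let m ≥ 0 and n ≥ 2 be integers that are not both odd. Then gcd(a₁, a₂, a₃) is associated to gcd(b₁, b₂, b₃). -/
open Polynomial

theorem star_of_david_lucas_type_not_both_odd (d g : Polynomial ℤ) (hd : d ≠ 0) (hg : g ≠ 0)
    (G : ℕ → Polynomial ℤ) (p₀ : ℤ) (h0 : G 0 = C p₀) (hp₀ : p₀ ≠ 0) (h1 : G 1 ≠ 0)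
    (hLucas : 2 * G 1 = G 0 * d)
    (hrec : ∀ n : ℕ, 2 ≤ n → G n = d * G (n - 1) + g * G (n - 2))
    (hgcd1 : IsUnit (gcd (G 0) (G 1))) (hgcd2 : IsUnit (gcd (G 0) d))
    (hgcd3 : IsUnit (gcd (G 0) g)) (hgcd4 : IsUnit (gcd d g))
    (m n : ℕ) (hn : 2 ≤ n) (hpar : ¬(Odd m ∧ Odd n)) :
    Associated
      (gcd (gcd (G (m + 1) * G (n - 2)) (G m * G n)) (G (m + 2) * G (n - 1)))
      (gcd (gcd (G m * G (n - 1)) (G (m + 2) * G (n - 2))) (G (m + 1) * G n)) := by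
  -- if a prime divides two elements with unit gcd, contradiction
  have cop : ∀ {a b : Polynomial ℤ}, IsUnit (gcd a b) → ∀ {p : Polynomial ℤ}, Prime p →
      p ∣ a → p ∣ b → False := by
    intro a b h p hp ha hb
    exact hp.not_unit (isUnit_of_dvd_unit (dvd_gcd ha hb) h)
  -- convenient form of the recurrence
  have hrec' : ∀ k : ℕ, G (k + 2) = d * G (k + 1) + g * G k := by
    intro k
    have := hrec (k + 2) (by omega)
    simpa using this
  -- P1 : no prime divides both g and some G k
  have P1 : ∀ p : Polynomial ℤ, Prime p → p ∣ g → ∀ k, p ∣ G k → False := by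
    intro p hp hpg k
    induction k using Nat.strong_induction_on with
    | _ k ih =>
      match k, ih with
      | 0, ih => exact fun h => cop hgcd3 hp h hpg
      | 1, ih =>
        intro hG1
        have h2 : p ∣ G 0 * d := hLucas ▸ (hG1.mul_left 2)
        rcases hp.dvd_mul.mp h2 with h | h
        · exact cop hgcd3 hp h hpg
        · exact cop hgcd4 hp h hpg
      | (k + 2), ih =>
        intro h
        have hgk : p ∣ g * G k := hpg.mul_right _
        have hdk : p ∣ d * G (k + 1) := by
          have := dvd_sub ((hrec' k) ▸ h) hgk
          simpa using this
        rcases hp.dvd_mul.mp hdk with h' | h'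
        · exact cop hgcd4 hp h' hpg
        · exact ih (k + 1) (by omega) h'
  -- P2 : no prime divides two consecutive terms
  have P2 : ∀ p : Polynomial ℤ, Prime p → ∀ k, p ∣ G k → p ∣ G (k + 1) → False := by
    intro p hp k
    induction k using Nat.strong_induction_on with
    | _ k ih =>
      match k, ih with
      | 0, ih => exact fun ha hb => cop hgcd1 hp ha hb
      | (k + 1), ih =>
        intro ha hb
        have hgk : p ∣ g * G k := by
          have := dvd_sub ((hrec' k) ▸ hb) (ha.mul_left d)
          simpa using this
        rcases hp.dvd_mul.mp hgk with h' | h'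
        · exact P1 p hp h' (k + 1) ha
        · exact ih k (by omega) h' ha
  -- P4 : a prime dividing d divides G k only for odd k
  have P4 : ∀ p : Polynomial ℤ, Prime p → p ∣ d → ∀ k, p ∣ G k → Odd k := by
    intro p hp hpd k
    induction k using Nat.strong_induction_on with
    | _ k ih =>
      match k, ih with
      | 0, ih => exact fun h => (cop hgcd2 hp h hpd).elim
      | 1, ih => exact fun _ => ⟨0, rfl⟩
      | (k + 2), ih =>
        intro h
        have hgk : p ∣ g * G k := by
          have := dvd_sub ((hrec' k) ▸ h) ((hpd.mul_right (G (k + 1))))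
          simpa [mul_comm] using this
        rcases hp.dvd_mul.mp hgk with h' | h'
        · exact (cop hgcd4 hp hpd h').elim
        · obtain ⟨t, ht⟩ := ih k (by omega) h'
          exact ⟨t + 1, by omega⟩
  -- from p ∣ G j and p ∣ G (j+2) deduce p ∣ d
  have Pd : ∀ p : Polynomial ℤ, Prime p → ∀ j, p ∣ G j → p ∣ G (j + 2) → p ∣ d := by
    intro p hp j hj hj2
    have hdk : p ∣ d * G (j + 1) := by
      have := dvd_sub ((hrec' j) ▸ hj2) (hj.mul_left g)
      simpa using this
    rcases hp.dvd_mul.mp hdk with h' | h'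
    · exact h'
    · exact (P2 p hp j hj h').elim
  -- rewrite n as k + 2
  obtain ⟨k, rfl⟩ : ∃ k, n = k + 2 := ⟨n - 2, by omega⟩
  have hn2 : k + 2 - 2 = k := by omega
  have hn1 : k + 2 - 1 = k + 1 := by omega
  rw [hn1, hn2]
  have oddk2 : ∀ {j : ℕ}, Odd j → Odd (j + 2) := by
    rintro j ⟨t, ht⟩; exact ⟨t + 1, by omega⟩
  -- no prime divides all of a₁, a₂, a₃
  have mainA : ∀ p : Polynomial ℤ, Prime p → p ∣ G (m + 1) * G k → p ∣ G m * G (k + 2) →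
      p ∣ G (m + 2) * G (k + 1) → False := by
    intro p hp h1' h2' h3'
    rcases hp.dvd_mul.mp h2' with hGm | hGn
    · rcases hp.dvd_mul.mp h1' with hGm1 | hGk
      · exact P2 p hp m hGm hGm1
      rcases hp.dvd_mul.mp h3' with hGm2 | hGk1
      · have hpd : p ∣ d := Pd p hp m hGm hGm2
        exact hpar ⟨P4 p hp hpd m hGm, oddk2 (P4 p hp hpd k hGk)⟩
      · exact P2 p hp k hGk hGk1
    · rcases hp.dvd_mul.mp h3' with hGm2 | hGk1
      · rcases hp.dvd_mul.mp h1' with hGm1 | hGk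
        · exact P2 p hp (m + 1) hGm1 hGm2
        have hpd : p ∣ d := Pd p hp k hGk hGn
        obtain ⟨t, ht⟩ := P4 p hp hpd (m + 2) hGm2
        exact hpar ⟨⟨t - 1, by omega⟩, P4 p hp hpd (k + 2) hGn⟩
      · exact P2 p hp (k + 1) hGk1 hGn
  -- no prime divides all of b₁, b₂, b₃
  have mainB : ∀ p : Polynomial ℤ, Prime p → p ∣ G m * G (k + 1) → p ∣ G (m + 2) * G k →
      p ∣ G (m + 1) * G (k + 2) → False := by
    intro p hp h1' h2' h3'
    rcases hp.dvd_mul.mp h1' with hGm | hGk1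
    · rcases hp.dvd_mul.mp h3' with hGm1 | hGn
      · exact P2 p hp m hGm hGm1
      rcases hp.dvd_mul.mp h2' with hGm2 | hGk
      · have hpd : p ∣ d := Pd p hp m hGm hGm2
        exact hpar ⟨P4 p hp hpd m hGm, P4 p hp hpd (k + 2) hGn⟩
      · have hpd : p ∣ d := Pd p hp k hGk hGn
        exact hpar ⟨P4 p hp hpd m hGm, P4 p hp hpd (k + 2) hGn⟩
    · rcases hp.dvd_mul.mp h3' with hGm1 | hGn
      · rcases hp.dvd_mul.mp h2' with hGm2 | hGk
        · exact P2 p hp (m + 1) hGm1 hGm2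
        · exact P2 p hp k hGk hGk1
      · exact P2 p hp (k + 1) hGk1 hGn
  -- an element not divisible by any prime is a unit
  have unit_of : ∀ a b c : Polynomial ℤ,
      (∀ p : Polynomial ℤ, Prime p → p ∣ a → p ∣ b → p ∣ c → False) →
      IsUnit (gcd (gcd a b) c) := by
    intro a b c hmain
    by_contra hu
    rcases eq_or_ne (gcd (gcd a b) c) 0 with h0' | h0'
    · have hc : c = 0 := ((gcd_eq_zero_iff _ _).mp h0').2
      have hab := ((gcd_eq_zero_iff _ _).mp h0').1
      have ha : a = 0 := ((gcd_eq_zero_iff _ _).mp hab).1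
      have hb : b = 0 := ((gcd_eq_zero_iff _ _).mp hab).2
      exact hmain (C 2) (Polynomial.prime_C_iff.mpr Int.prime_two)
        (ha ▸ dvd_zero _) (hb ▸ dvd_zero _) (hc ▸ dvd_zero _)
    · obtain ⟨q, hqi, hqd⟩ := WfDvdMonoid.exists_irreducible_factor hu h0'
      have hq := UniqueFactorizationMonoid.irreducible_iff_prime.mp hqi
      have hqa : q ∣ a := hqd.trans ((gcd_dvd_left _ _).trans (gcd_dvd_left _ _))
      have hqb : q ∣ b := hqd.trans ((gcd_dvd_left _ _).trans (gcd_dvd_right _ _))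
      have hqc : q ∣ c := hqd.trans (gcd_dvd_right _ _)
      exact hmain q hq hqa hqb hqc
  have hA := unit_of _ _ _ mainA
  have hB := unit_of _ _ _ mainB
  exact (associated_one_iff_isUnit.mpr hA).trans (associated_one_iff_isUnit.mpr hB).symm
end

section
/- Let G be a GFP sequence. If i, j, k, r are nonnegative integers with k + j ≤ r, then G(k+j+i)·G(r+i−k−j) − G(k+i)·G(r+i−k) = (−1)^i · g^i · ( G(k+j)·G(r−k−j) − G(k)·G(r−k) ). -/
open Polynomial

private lemma gfp_swap (d g : Polynomial ℤ) (G : ℕ → Polynomial ℤ)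
    (hrec : ∀ n : ℕ, 2 ≤ n → G n = d * G (n - 1) + g * G (n - 2)) (a b : ℕ) :
    G (a + 1) * G (b + 2) + g * (G a * G (b + 1)) =
      G (a + 2) * G (b + 1) + g * (G (a + 1) * G b) := by
  have ha : G (a + 2) = d * G (a + 1) + g * G a := by
    have := hrec (a + 2) (by omega)
    simpa using this
  have hb : G (b + 2) = d * G (b + 1) + g * G b := by
    have := hrec (b + 2) (by omega)
    simpa using this
  rw [ha, hb]; ring

private lemma gfp_key (d g : Polynomial ℤ) (G : ℕ → Polynomial ℤ)
    (hrec : ∀ n : ℕ, 2 ≤ n → G n = d * G (n - 1) + g * G (n - 2)) :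
    ∀ b a : ℕ, G (a + 1) * G (b + 1) + g * (G a * G b) =
      G (a + b + 1) * G 1 + g * (G (a + b) * G 0) := by
  intro b
  induction b with
  | zero => intro a; simp
  | succ n ih =>
      intro a
      rw [gfp_swap d g G hrec a n, ih (a + 1)]
      ring_nf

theorem hosoya_parallel_property (d g : Polynomial ℤ) (hd : d ≠ 0) (hg : g ≠ 0)
    (G : ℕ → Polynomial ℤ) (p₀ : ℤ) (h0 : G 0 = C p₀) (h1 : G 1 ≠ 0)
    (hrec : ∀ n : ℕ, 2 ≤ n → G n = d * G (n - 1) + g * G (n - 2))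
    (i j k r : ℕ) (hkj : k + j ≤ r) :
    G (k + j + i) * G (r + i - (k + j)) - G (k + i) * G (r + i - k) =
      (-1) ^ i * g ^ i * (G (k + j) * G (r - (k + j)) - G k * G (r - k)) := by
  induction i with
  | zero => simp
  | succ i ih =>
      have e1 : k + j + (i + 1) = (k + j + i) + 1 := by omega
      have e2 : r + (i + 1) - (k + j) = (r + i - (k + j)) + 1 := by omega
      have e3 : k + (i + 1) = (k + i) + 1 := by omega
      have e4 : r + (i + 1) - k = (r + i - k) + 1 := by omega
      rw [e1, e2, e3, e4]
      have s1 := gfp_key d g G hrec (r + i - (k + j)) (k + j + i)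
      have s2 := gfp_key d g G hrec (r + i - k) (k + i)
      have esum : k + j + i + (r + i - (k + j)) = k + i + (r + i - k) := by omega
      rw [esum] at s1
      have step : G ((k + j + i) + 1) * G ((r + i - (k + j)) + 1) -
          G ((k + i) + 1) * G ((r + i - k) + 1) =
          -g * (G (k + j + i) * G (r + i - (k + j)) - G (k + i) * G (r + i - k)) := by
        have := s1.trans s2.symm
        linear_combination this
      rw [step, ih]
      ring
end

section
/- (Johnson identity for GFP) Let G be a GFP sequence and let a, b, c, e, t be nonnegative integers with t ≤ min{a, b, c, e} and a + b = c + e. Then G(a)·G(b) − G(c)·G(e) = (−1)^t · g^t · ( G(a−t)·G(b−t) − G(c−t)·G(e−t) ). -/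
open Polynomial

theorem johnson_identity_GFP (d g : Polynomial ℤ) (hd : d ≠ 0) (hg : g ≠ 0)
    (G : ℕ → Polynomial ℤ) (p₀ : ℤ) (h0 : G 0 = C p₀) (h1 : G 1 ≠ 0)
    (hrec : ∀ n : ℕ, 2 ≤ n → G n = d * G (n - 1) + g * G (n - 2))
    (a b c e t : ℕ) (hta : t ≤ a) (htb : t ≤ b) (htc : t ≤ c) (hte : t ≤ e)
    (habce : a + b = c + e) :
    G a * G b - G c * G e =
      (-1) ^ t * g ^ t * (G (a - t) * G (b - t) - G (c - t) * G (e - t)) := by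
  have Hstep : ∀ a b : ℕ, G (a + 2) * G (b + 1) + g * G (a + 1) * G b
      = G (a + 1) * G (b + 2) + g * G a * G (b + 1) := by
    intro a b
    have ha := hrec (a + 2) (by omega)
    have hb := hrec (b + 2) (by omega)
    norm_num at ha hb
    rw [ha, hb]
    ring
  have Hconst : ∀ a b : ℕ, G (a + 1) * G (b + 1) + g * G a * G b
      = G 1 * G (a + b + 1) + g * G 0 * G (a + b) := by
    intro a
    induction a with
    | zero => intro b; simp
    | succ n ih =>
      intro b
      have h1 : n + 1 + 1 = n + 2 := rfl
      have h2 : n + (b + 1) = n + 1 + b := by omega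
      rw [h1, Hstep n b, ih (b + 1), h2]
  have key : ∀ a b c e : ℕ, a + b = c + e →
      G (a + 1) * G (b + 1) - G (c + 1) * G (e + 1) = -g * (G a * G b - G c * G e) := by
    intro a b c e h
    have h1 := Hconst a b
    have h2 := Hconst c e
    rw [h] at h1
    linear_combination h1 - h2
  induction t generalizing a b c e with
  | zero => simp
  | succ t ih =>
    obtain ⟨a', rfl⟩ : ∃ a', a = a' + 1 := ⟨a - 1, by omega⟩
    obtain ⟨b', rfl⟩ : ∃ b', b = b' + 1 := ⟨b - 1, by omega⟩
    obtain ⟨c', rfl⟩ : ∃ c', c = c' + 1 := ⟨c - 1, by omega⟩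
    obtain ⟨e', rfl⟩ : ∃ e', e = e' + 1 := ⟨e - 1, by omega⟩
    have h' : a' + b' = c' + e' := by omega
    rw [key a' b' c' e' h',
      ih a' b' c' e' (by omega) (by omega) (by omega) (by omega) h']
    simp only [Nat.succ_sub_succ]
    ring
end

section
/- (Catalan identity for GFP) Let G be a GFP sequence and let m, r be nonnegative integers with r ≤ m. Then G(m)² − G(m+r)·G(m−r) = (−1)^{m−r} · g^{m−r} · ( G(r)² − G(2r)·G(0) ). -/
open Polynomial

private noncomputable def Ufib (d g : Polynomial ℤ) : ℕ → Polynomial ℤ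
  | 0 => 0
  | 1 => 1
  | (n+2) => d * Ufib d g (n+1) + g * Ufib d g n

private lemma Ufib_add (d g : Polynomial ℤ) (a : ℕ) : ∀ b : ℕ,
    Ufib d g (a + b + 1) =
      Ufib d g (a + 1) * Ufib d g (b + 1) + g * Ufib d g a * Ufib d g b := by
  intro b
  induction b using Nat.twoStepInduction with
  | zero => simp [Ufib]
  | one =>
      show Ufib d g (a + 1 + 1) = _
      simp [Ufib]
      try ring
  | more b ih1 ih2 =>
      have e : Ufib d g (a + b + 1 + 2) =
          d * Ufib d g (a + b + 1 + 1) + g * Ufib d g (a + b + 1) := rfl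
      rw [show a + (b + 2) + 1 = a + b + 1 + 2 from by ring, e,
        show a + b + 1 + 1 = a + (b + 1) + 1 from by ring, ih2, ih1]
      have f1 : Ufib d g (b + 2 + 1) = d * Ufib d g (b + 2) + g * Ufib d g (b + 1) := rfl
      have f3 : Ufib d g (b + 1 + 1) = d * Ufib d g (b + 1) + g * Ufib d g b := rfl
      have f2 : Ufib d g (b + 2) = d * Ufib d g (b + 1) + g * Ufib d g b := rfl
      rw [f1, f3]
      try rw [f2]
      ring

theorem catalan_identity_GFP (d g : Polynomial ℤ) (hd : d ≠ 0) (hg : g ≠ 0)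
    (G : ℕ → Polynomial ℤ) (p₀ : ℤ) (h0 : G 0 = C p₀) (h1 : G 1 ≠ 0)
    (hrec : ∀ n : ℕ, 2 ≤ n → G n = d * G (n - 1) + g * G (n - 2))
    (m r : ℕ) (hrm : r ≤ m) :
    G m ^ 2 - G (m + r) * G (m - r) =
      (-1) ^ (m - r) * g ^ (m - r) * (G r ^ 2 - G (2 * r) * G 0) := by
  -- shift lemma
  have shift : ∀ k s : ℕ, G (s + 1 + k) =
      Ufib d g (k + 1) * G (s + 1) + g * Ufib d g k * G s := by
    intro k
    induction k using Nat.twoStepInduction with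
    | zero => intro s; simp [Ufib]
    | one =>
        intro s
        have := hrec (s + 2) (by omega)
        simp only [show s + 2 - 1 = s + 1 from by omega,
          show s + 2 - 2 = s from by omega] at this
        show G (s + 2) = _
        rw [this]; simp [Ufib]
        try ring
    | more k ih1 ih2 =>
        intro s
        have := hrec (s + 1 + (k + 2)) (by omega)
        simp only [show s + 1 + (k + 2) - 1 = s + 1 + (k + 1) from by omega,
          show s + 1 + (k + 2) - 2 = s + 1 + k from by omega] at this
        rw [this, ih1 s, ih2 s]
        have e1 : Ufib d g (k + 2 + 1) = d * Ufib d g (k + 2) + g * Ufib d g (k + 1) := rfl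
        have e2 : Ufib d g (k + 1 + 1) = d * Ufib d g (k + 1) + g * Ufib d g k := rfl
        rw [e1, show k + 1 + 1 = k + 2 from rfl] at *
        rw [e2]
        ring
  -- step lemma
  have step : ∀ s q : ℕ,
      G (s + 1 + q) ^ 2 - G (s + 1 + 2 * q) * G (s + 1) =
        (-g) * (G (s + q) ^ 2 - G (s + 2 * q) * G s) := by
    intro s q
    match q with
    | 0 => simp; ring
    | (t + 1) =>
        rw [show s + 1 + 2 * (t + 1) = s + 1 + (2 * t + 2) from by ring,
          show s + (t + 1) = s + 1 + t from by ring,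
          show s + 2 * (t + 1) = s + 1 + (2 * t + 1) from by ring,
          shift (t + 1) s, shift (2 * t + 2) s, shift t s, shift (2 * t + 1) s,
          show 2 * t + 1 + 1 = 2 * t + 2 from by ring]
        have a1 := Ufib_add d g (t + 1) (t + 1)
        have a2 := Ufib_add d g (t + 1) t
        have a3 := Ufib_add d g t t
        rw [show t + 1 + (t + 1) + 1 = 2 * t + 2 + 1 from by ring] at a1
        rw [show t + 1 + t + 1 = 2 * t + 2 from by ring] at a2
        rw [show t + t + 1 = 2 * t + 1 from by ring] at a3
        rw [a1, a2, a3]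
        ring
  obtain ⟨s, rfl⟩ : ∃ s, m = r + s := ⟨m - r, by omega⟩
  simp only [show r + s - r = s from by omega]
  induction s with
  | zero =>
      simp only [Nat.add_zero, show r + r = 2 * r from by ring, pow_zero, one_mul]
  | succ s ih =>
      have e1 : r + (s + 1) = s + 1 + r := by ring
      have e2 : r + (s + 1) + r = s + 1 + 2 * r := by ring
      rw [e1, show s + 1 + r + r = s + 1 + 2 * r from by ring, step s r,
        show s + r = r + s from by ring, show s + 2 * r = r + s + r from by ring, ih (by omega)]
      ring
end

section
/- Let G be a GFP sequence. Then for every integer n ≥ 1, Σ_{j=1}^{n} d · g^{n−j} · G(j)² = G(n+1)·G(n) − g^{n}·G(1)·G(0). -/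
/-!
Put `a n = G (n + 1) * G n`. Multiplying the recurrence `G (n + 2) = d * G (n + 1) + g * G n` by
`G (n + 1)` gives the first-order recurrence `a (n + 1) = d * G (n + 1) ^ 2 + g * a n`, and unrolling
it `n` times yields the weighted sum of squares.
-/

open Polynomial Finset

theorem sum_Icc_pow_mul_eq_of_succ_eq_add_mul {R : Type*} [CommRing R] {a b : ℕ → R} {g : R}
    (h : ∀ n, a (n + 1) = b (n + 1) + g * a n) (n : ℕ) :
    ∑ j ∈ Icc 1 n, g ^ (n - j) * b j = a n - g ^ n * a 0 := by
  induction n with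
  | zero => simp
  | succ n ih =>
    have hshift : ∑ j ∈ Icc 1 n, g ^ (n + 1 - j) * b j = g * ∑ j ∈ Icc 1 n, g ^ (n - j) * b j := by
      rw [mul_sum]
      refine sum_congr rfl fun j hj => ?_
      rw [Nat.sub_add_comm (mem_Icc.mp hj).2, pow_succ]
      ring
    rw [sum_Icc_succ_top (Nat.le_add_left 1 n), hshift, ih, h, Nat.sub_self]
    ring

theorem succ_mul_eq_sq_add_mul_of_recurrence {R : Type*} [CommRing R] {d g : R} {G : ℕ → R}
    (hG : ∀ n, G (n + 2) = d * G (n + 1) + g * G n) (n : ℕ) :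
    G (n + 2) * G (n + 1) = d * G (n + 1) ^ 2 + g * (G (n + 1) * G n) := by
  rw [hG]
  ring

theorem sum_Icc_mul_pow_mul_sq_of_recurrence {R : Type*} [CommRing R] {d g : R} {G : ℕ → R}
    (hG : ∀ n, G (n + 2) = d * G (n + 1) + g * G n) (n : ℕ) :
    ∑ j ∈ Icc 1 n, d * g ^ (n - j) * G j ^ 2 = G (n + 1) * G n - g ^ n * G 1 * G 0 := by
  calc ∑ j ∈ Icc 1 n, d * g ^ (n - j) * G j ^ 2 = ∑ j ∈ Icc 1 n, g ^ (n - j) * (d * G j ^ 2) :=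
        sum_congr rfl fun _ _ => by ring
    _ = G (n + 1) * G n - g ^ n * (G 1 * G 0) :=
        sum_Icc_pow_mul_eq_of_succ_eq_add_mul (a := fun n => G (n + 1) * G n)
          (succ_mul_eq_sq_add_mul_of_recurrence hG) n
    _ = G (n + 1) * G n - g ^ n * G 1 * G 0 := by rw [mul_assoc]

theorem GFP_weighted_square_sum_general (d g : Polynomial ℤ)
    (G : ℕ → Polynomial ℤ)
    (hrec : ∀ n : ℕ, 2 ≤ n → G n = d * G (n - 1) + g * G (n - 2))
    (n : ℕ) :
    ∑ j ∈ Finset.Icc 1 n, d * g ^ (n - j) * G j ^ 2 =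
      G (n + 1) * G n - g ^ n * G 1 * G 0 :=
  sum_Icc_mul_pow_mul_sq_of_recurrence (fun n => hrec (n + 2) (Nat.le_add_left 2 n)) n

theorem GFP_weighted_square_sum (d g : Polynomial ℤ) (hd : d ≠ 0) (hg : g ≠ 0)
    (G : ℕ → Polynomial ℤ) (p₀ : ℤ) (h0 : G 0 = C p₀) (h1 : G 1 ≠ 0)
    (hrec : ∀ n : ℕ, 2 ≤ n → G n = d * G (n - 1) + g * G (n - 2))
    (n : ℕ) (hn : 1 ≤ n) :
    ∑ j ∈ Finset.Icc 1 n, d * g ^ (n - j) * G j ^ 2 =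
      G (n + 1) * G n - g ^ n * G 1 * G 0 :=
  GFP_weighted_square_sum_general d g G hrec n
end

section
/- Let G be a GFP sequence of Fibonacci type. Then for every integer n ≥ 1, Σ_{j=2}^{2n+1} I(j)·G(j)² = Σ_{j=1}^{n} G(4j+1), where I(j) = g if j is even and I(j) = 1 if j is odd. -/
/-! Pairing the terms `j = 2k` and `j = 2k + 1`, each pair `g G(2k)² + G(2k+1)²` equals
`G(4k+1)` by the doubling formula `G(2m+1) = G(m+1)² + g G(m)²`, the case `m = n` of the
addition formula `G(m+n+1) = G(m+1) G(n+1) + g G(m) G(n)`. -/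

open Polynomial Finset

section FibonacciType

variable {R : Type*} [CommRing R] {d g : R} {G : ℕ → R}

theorem fibType_add_succ (h0 : G 0 = 0) (h1 : G 1 = 1)
    (hrec : ∀ n, G (n + 2) = d * G (n + 1) + g * G n) (m n : ℕ) :
    G (m + n + 1) = G (m + 1) * G (n + 1) + g * G m * G n := by
  induction n generalizing m with
  | zero => simp [h0, h1]
  | succ n ih =>
    calc G (m + (n + 1) + 1) = G (m + 1 + n + 1) := by congr 1; omega
      _ = G (m + 2) * G (n + 1) + g * G (m + 1) * G n := ih (m + 1)
      _ = G (m + 1) * G (n + 2) + g * G m * G (n + 1) := by rw [hrec m, hrec n]; ring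

theorem fibType_two_mul_add_one (h0 : G 0 = 0) (h1 : G 1 = 1)
    (hrec : ∀ n, G (n + 2) = d * G (n + 1) + g * G n) (m : ℕ) :
    G (2 * m + 1) = G (m + 1) ^ 2 + g * G m ^ 2 := by
  rw [two_mul, fibType_add_succ h0 h1 hrec]
  ring

theorem fibType_sum_Icc_weighted_sq (h0 : G 0 = 0) (h1 : G 1 = 1)
    (hrec : ∀ n, G (n + 2) = d * G (n + 1) + g * G n) (n : ℕ) :
    ∑ j ∈ Icc 2 (2 * n + 1), (if Even j then g else 1) * G j ^ 2 =
      ∑ j ∈ Icc 1 n, G (4 * j + 1) := by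
  induction n with
  | zero => rfl
  | succ n ih =>
    have hpair : g * G (2 * n + 2) ^ 2 + G (2 * n + 3) ^ 2 = G (4 * (n + 1) + 1) := by
      rw [show 4 * (n + 1) + 1 = 2 * (2 * n + 2) + 1 by ring,
        fibType_two_mul_add_one h0 h1 hrec]
      ring
    rw [show 2 * (n + 1) + 1 = 2 * n + 1 + 1 + 1 by ring,
      sum_Icc_succ_top (by omega : 2 ≤ 2 * n + 1 + 1 + 1),
      sum_Icc_succ_top (by omega : 2 ≤ 2 * n + 1 + 1),
      sum_Icc_succ_top (by omega : 1 ≤ n + 1), ih, ← hpair, add_assoc]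
    have heven : Even (2 * n + 1 + 1) := ⟨n + 1, by ring⟩
    simp [heven, Nat.even_add_one]

end FibonacciType

theorem GFP_fib_type_square_sum_I_general (d g : Polynomial ℤ)
    (G : ℕ → Polynomial ℤ) (h0 : G 0 = 0) (h1 : G 1 = 1)
    (hrec : ∀ n : ℕ, 2 ≤ n → G n = d * G (n - 1) + g * G (n - 2))
    (n : ℕ) :
    ∑ j ∈ Finset.Icc 2 (2 * n + 1), (if Even j then g else 1) * G j ^ 2 =
      ∑ j ∈ Finset.Icc 1 n, G (4 * j + 1) :=
  fibType_sum_Icc_weighted_sq h0 h1 (fun k => hrec (k + 2) (by omega)) n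

theorem GFP_fib_type_square_sum_I (d g : Polynomial ℤ) (hd : d ≠ 0) (hg : g ≠ 0)
    (G : ℕ → Polynomial ℤ) (h0 : G 0 = 0) (h1 : G 1 = 1)
    (hrec : ∀ n : ℕ, 2 ≤ n → G n = d * G (n - 1) + g * G (n - 2))
    (n : ℕ) (hn : 1 ≤ n) :
    ∑ j ∈ Finset.Icc 2 (2 * n + 1), (if Even j then g else 1) * G j ^ 2 =
      ∑ j ∈ Finset.Icc 1 n, G (4 * j + 1) :=
  GFP_fib_type_square_sum_I_general d g G h0 h1 hrec n
end

section
/- Let G be a GFP sequence of Fibonacci type. Then for every integer n ≥ 1, Σ_{j=2}^{2n+1} (−1)^{j+1}·I(j)²·G(2j)² = d · Σ_{j=1}^{n} G(8j+2), where I(j) = g if j is even and I(j) = 1 if j is odd. -/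
/-!
Pairing the summands `j = 2k` and `j = 2k + 1` turns the left side into
`∑ₖ (G(4k+2)² - g² G(4k)²)`. Each bracket factors as
`(G(4k+2) - g G(4k)) (G(4k+2) + g G(4k)) = d G(4k+1) (G(4k+2) + g G(4k))`,
which is `d G(8k+2)` by the addition formula `G(m+k+1) = G(m+1) G(k+1) + g G(m) G(k)`.
-/

open Polynomial Finset

theorem sum_Icc_two_eq_sum_Icc_one_pairs {M : Type*} [AddCommMonoid M] (f : ℕ → M) (n : ℕ) :
    ∑ j ∈ Icc 2 (2 * n + 1), f j = ∑ k ∈ Icc 1 n, (f (2 * k) + f (2 * k + 1)) := by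
  induction n with
  | zero => simp
  | succ n ih =>
    rw [show 2 * (n + 1) + 1 = 2 * n + 1 + 1 + 1 by ring,
      sum_Icc_succ_top (by omega), sum_Icc_succ_top (by omega), ih,
      sum_Icc_succ_top (by omega), add_assoc]
    ring_nf

section FibonacciType

variable {R : Type*} [CommRing R] {d g : R} {G : ℕ → R}

theorem gfp_add_succ (hrec : ∀ m, G (m + 2) = d * G (m + 1) + g * G m)
    (h0 : G 0 = 0) (h1 : G 1 = 1) (m k : ℕ) :
    G (m + k + 1) = G (m + 1) * G (k + 1) + g * G m * G k := by
  induction k generalizing m with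
  | zero => simp [h0, h1]
  | succ k ih =>
    rw [show m + (k + 1) + 1 = m + 1 + k + 1 by ring, ih (m + 1), hrec m, hrec k]
    ring

theorem gfp_sq_sub_mul_sq (hrec : ∀ m, G (m + 2) = d * G (m + 1) + g * G m)
    (h0 : G 0 = 0) (h1 : G 1 = 1) (m : ℕ) :
    G (m + 2) ^ 2 - g ^ 2 * G m ^ 2 = d * G (2 * m + 2) := by
  have hdouble : G (2 * m + 2) = G (m + 2) * G (m + 1) + g * G (m + 1) * G m := by
    rw [show 2 * m + 2 = m + 1 + m + 1 by ring, gfp_add_succ hrec h0 h1]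
  rw [hdouble, hrec m]
  ring

end FibonacciType

theorem GFP_fib_type_alternating_square_sum_general (d g : Polynomial ℤ)
    (G : ℕ → Polynomial ℤ) (h0 : G 0 = 0) (h1 : G 1 = 1)
    (hrec : ∀ n : ℕ, 2 ≤ n → G n = d * G (n - 1) + g * G (n - 2))
    (n : ℕ) :
    ∑ j ∈ Finset.Icc 2 (2 * n + 1),
        (-1) ^ (j + 1) * (if Even j then g else 1) ^ 2 * G (2 * j) ^ 2 =
      d * ∑ j ∈ Finset.Icc 1 n, G (8 * j + 2) := by
  have hrec' : ∀ m, G (m + 2) = d * G (m + 1) + g * G m := fun m => by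
    simpa using hrec (m + 2) (by omega)
  rw [sum_Icc_two_eq_sum_Icc_one_pairs, mul_sum]
  refine sum_congr rfl fun k _ => ?_
  have hsq := gfp_sq_sub_mul_sq hrec' h0 h1 (4 * k)
  rw [show 2 * (4 * k) + 2 = 8 * k + 2 by ring] at hsq
  rw [show 2 * (2 * k + 1) = 4 * k + 2 by ring, show 2 * (2 * k) = 4 * k by ring]
  have hodd : (-1 : Polynomial ℤ) ^ (2 * k + 1) = -1 := Odd.neg_one_pow ⟨k, rfl⟩
  have heven : (-1 : Polynomial ℤ) ^ (2 * k + 1 + 1) = 1 := Even.neg_one_pow ⟨k + 1, by ring⟩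
  rw [if_pos (even_two_mul k), if_neg (Nat.not_even_two_mul_add_one k), hodd, heven]
  linear_combination hsq

theorem GFP_fib_type_alternating_square_sum (d g : Polynomial ℤ) (hd : d ≠ 0) (hg : g ≠ 0)
    (G : ℕ → Polynomial ℤ) (h0 : G 0 = 0) (h1 : G 1 = 1)
    (hrec : ∀ n : ℕ, 2 ≤ n → G n = d * G (n - 1) + g * G (n - 2))
    (n : ℕ) (hn : 1 ≤ n) :
    ∑ j ∈ Finset.Icc 2 (2 * n + 1),
        (-1) ^ (j + 1) * (if Even j then g else 1) ^ 2 * G (2 * j) ^ 2 =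
      d * ∑ j ∈ Finset.Icc 1 n, G (8 * j + 2) :=
  GFP_fib_type_alternating_square_sum_general d g G h0 h1 hrec n
end

section
/- Let G be a GFP sequence of Fibonacci type. Then for every integer n ≥ 1, d · Σ_{j=1}^{n} g^{2(n−j)} · G(4j−3) = G(2n−1)·G(2n); equivalently, Σ_{j=1}^{n} g^{2(n−j)} G(4j−3) = G(2n−1)·G(2n)/d. -/
/-!
The addition formula `G (m + n + 1) = G (m + 1) G (n + 1) + g G m G n` gives
`G (4n + 1) = G (2n + 1)² + g G (2n)²`, and together with the recurrence this turns into
`G (2n + 1) G (2n + 2) = d G (4n + 1) + g² G (2n - 1) G (2n)`.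
Unrolling this identity down to `G 1 G 2 = d` yields the sum.
-/

open Polynomial Finset

structure IsFibonacciType_s18 {R : Type*} [CommRing R] (d g : R) (G : ℕ → R) : Prop where
  zero : G 0 = 0
  one : G 1 = 1
  succ_succ : ∀ n, G (n + 2) = d * G (n + 1) + g * G n

namespace IsFibonacciType_s18

variable {R : Type*} [CommRing R] {d g : R} {G : ℕ → R}

theorem add_formula (hG : IsFibonacciType_s18 d g G) (m n : ℕ) :
    G (m + n + 1) = G (m + 1) * G (n + 1) + g * G m * G n := by
  induction n using Nat.twoStepInduction with
  | zero => simp [hG.zero, hG.one]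
  | one => rw [hG.succ_succ m, hG.succ_succ 0, hG.zero, hG.one]; ring
  | more n ih₀ ih₁ =>
    calc G (m + (n + 2) + 1)
        = d * G (m + (n + 1) + 1) + g * G (m + n + 1) := hG.succ_succ (m + n + 1)
      _ = G (m + 1) * (d * G (n + 2) + g * G (n + 1)) + g * G m * (d * G (n + 1) + g * G n) := by
        rw [ih₀, ih₁]; ring
      _ = G (m + 1) * G (n + 2 + 1) + g * G m * G (n + 2) := by rw [← hG.succ_succ, ← hG.succ_succ]

theorem consecutive_mul_succ (hG : IsFibonacciType_s18 d g G) (n : ℕ) :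
    G (2 * n + 3) * G (2 * n + 4) = d * G (4 * n + 5) + g ^ 2 * (G (2 * n + 1) * G (2 * n + 2)) := by
  have hsq : G (4 * n + 5) = G (2 * n + 3) ^ 2 + g * G (2 * n + 2) ^ 2 := by
    rw [show 4 * n + 5 = (2 * n + 2) + (2 * n + 2) + 1 by ring, hG.add_formula]; ring
  rw [hsq, hG.succ_succ (2 * n + 2), hG.succ_succ (2 * n + 1)]
  ring

theorem mul_sum_eq_consecutive_mul (hG : IsFibonacciType_s18 d g G) (n : ℕ) :
    d * ∑ j ∈ Icc 1 (n + 1), g ^ (2 * (n + 1 - j)) * G (4 * j - 3) =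
      G (2 * n + 1) * G (2 * n + 2) := by
  induction n with
  | zero => simp [hG.succ_succ 0, hG.zero, hG.one, mul_comm]
  | succ n ih =>
    have hscale : ∀ j ∈ Icc 1 (n + 1),
        g ^ (2 * (n + 2 - j)) * G (4 * j - 3) = g ^ 2 * (g ^ (2 * (n + 1 - j)) * G (4 * j - 3)) := by
      intro j hj
      rw [show 2 * (n + 2 - j) = 2 + 2 * (n + 1 - j) by grind, pow_add, mul_assoc]
    rw [sum_Icc_succ_top (by omega), sum_congr rfl hscale, ← mul_sum, mul_add, mul_left_comm, ih,
      Nat.sub_self, mul_zero, pow_zero, one_mul, show 4 * (n + 1 + 1) - 3 = 4 * n + 5 by omega,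
      show 2 * (n + 1) + 1 = 2 * n + 3 by ring, show 2 * (n + 1) + 2 = 2 * n + 4 by ring,
      hG.consecutive_mul_succ]
    ring

end IsFibonacciType_s18

theorem GFP_fib_type_closed_sum_general (d g : Polynomial ℤ)
    (G : ℕ → Polynomial ℤ) (h0 : G 0 = 0) (h1 : G 1 = 1)
    (hrec : ∀ n : ℕ, 2 ≤ n → G n = d * G (n - 1) + g * G (n - 2))
    (n : ℕ) :
    d * ∑ j ∈ Finset.Icc 1 n, g ^ (2 * (n - j)) * G (4 * j - 3) =
      G (2 * n - 1) * G (2 * n) := by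
  have hG : IsFibonacciType_s18 d g G := ⟨h0, h1, fun k => hrec (k + 2) (by omega)⟩
  rcases n with _ | n
  -- for `n = 0` both sides vanish, since `2 * 0 - 1 = 0` in `ℕ`
  · simp [h0]
  · rw [show 2 * (n + 1) - 1 = 2 * n + 1 by omega, show 2 * (n + 1) = 2 * n + 2 by ring]
    exact hG.mul_sum_eq_consecutive_mul n

theorem GFP_fib_type_closed_sum (d g : Polynomial ℤ) (hd : d ≠ 0) (hg : g ≠ 0)
    (G : ℕ → Polynomial ℤ) (h0 : G 0 = 0) (h1 : G 1 = 1)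
    (hrec : ∀ n : ℕ, 2 ≤ n → G n = d * G (n - 1) + g * G (n - 2))
    (n : ℕ) (hn : 1 ≤ n) :
    d * ∑ j ∈ Finset.Icc 1 n, g ^ (2 * (n - j)) * G (4 * j - 3) =
      G (2 * n - 1) * G (2 * n) :=
  GFP_fib_type_closed_sum_general d g G h0 h1 hrec n
end
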